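/- arXiv:2103.00905 — 2 statements merged into one kernel-verified Lean document; each statement's English description precedes it below -/
import Mathlib

section
/- Fix t∈𝕋 and let R̄_t be a conditional risk measure for vectors on L̄^∞(ℝ^d). Then ρ_t(X):=R̄_t(X1_{𝕋_t})_t, X∈R^{∞,d}_t, defines a conditional risk measure for processes, and R_s(Z):=R̄_t(Z1_{{s}})_s, Z∈L^∞_s(ℝ^d), defines a conditional risk measure for vectors on L^∞_s(ℝ^d) for each s=0,…,t−1. Moreover, if R̄_t is normalized (respectively conditionally convex, respectively conditionally coherent), then ρ_t and all R_s have the same property. -/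
open MeasureTheory Finset Pointwise Filter

noncomputable section

namespace RMPaper

variable {Ω : Type*}

/-- The space `L^∞(m; ℝ^d)` of bounded `m`-measurable `ℝ^d`-valued random vectors
(identified with its set of representatives). -/
def Linf (m : MeasurableSpace Ω) (d : ℕ) : Set (Ω → Fin d → ℝ) :=
  {X | Measurable[m] X ∧ ∃ C : ℝ, ∀ ω i, |X ω i| ≤ C}

/-- Membership in the subspace of eligible assets `M = ℝ^md × {0}^(d-md)`. -/
def inM (d md : ℕ) (x : Fin d → ℝ) : Prop := ∀ i : Fin d, md ≤ (i : ℕ) → x i = 0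

/-- The space `M_t = L^∞_t(M)` of eligible portfolios. -/
def Msp {m0 : MeasurableSpace Ω} (m : MeasurableSpace Ω) (P : @Measure Ω m0) (d md : ℕ) :
    Set (Ω → Fin d → ℝ) :=
  {X | X ∈ Linf m d ∧ ∀ᵐ ω ∂P, inM d md (X ω)}

/-- The cone `M_{t,+}` of nonnegative eligible portfolios. -/
def MspP {m0 : MeasurableSpace Ω} (m : MeasurableSpace Ω) (P : @Measure Ω m0) (d md : ℕ) :
    Set (Ω → Fin d → ℝ) :=
  {X | X ∈ Msp m P d md ∧ ∀ᵐ ω ∂P, ∀ i, 0 ≤ X ω i}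

/-- The space `L^1_t(ℝ^d)`. -/
def L1t {m0 : MeasurableSpace Ω} (m : MeasurableSpace Ω) (P : @Measure Ω m0) (d : ℕ) :
    Set (Ω → Fin d → ℝ) :=
  {Y | Measurable[m] Y ∧ ∀ i, Integrable (fun ω => Y ω i) P}

/-- The weak* topology `σ(L^∞_t, L^1_t)`, defined as the topology induced by all
pairings with elements of `L^1_t`. -/
def wStar {m0 : MeasurableSpace Ω} (m : MeasurableSpace Ω) (P : @Measure Ω m0) (d : ℕ) :
    TopologicalSpace (Ω → Fin d → ℝ) :=
  TopologicalSpace.induced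
    (fun X => fun Y : ↥(L1t m P d) => ∫ ω, ∑ i, Y.1 ω i * X ω i ∂P) Pi.topologicalSpace

/-- `S` is closed in the subspace topology (induced by `τ`) on `A`. -/
def IsClosedIn {β : Type*} (τ : TopologicalSpace β) (A S : Set β) : Prop :=
  @closure β τ S ∩ A ⊆ S

/-- `F_t`-decomposability of a set of random vectors. -/
def Decomp (m : MeasurableSpace Ω) {d : ℕ} (S : Set (Ω → Fin d → ℝ)) : Prop :=
  ∀ A : Set Ω, MeasurableSet[m] A → ∀ u ∈ S, ∀ v ∈ S,
    (A.indicator u + Aᶜ.indicator v) ∈ S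

/-- Finiteness at zero of a conditional risk measure: the value at `0` is nonempty, closed
(w.r.t. the subspace topology on `M_t`), `F_t`-decomposable, and generated by a measurable
random set `R₀` with `P[R₀ = M] = 0`. -/
def FinAtZero {m0 : MeasurableSpace Ω} (m : MeasurableSpace Ω) (P : @Measure Ω m0) (d md : ℕ)
    (S : Set (Ω → Fin d → ℝ)) : Prop :=
  S.Nonempty ∧ IsClosedIn (wStar m P d) (Msp m P d md) S ∧ Decomp m S ∧
    ∃ R0 : Ω → Set (Fin d → ℝ),
      MeasurableSet[m.prod inferInstance] {p : Ω × (Fin d → ℝ) | p.2 ∈ R0 p.1} ∧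
      S = {u | u ∈ Linf m d ∧ ∀ᵐ ω ∂P, u ω ∈ R0 ω} ∧
      P {ω | R0 ω = {x | inM d md x}} = 0

/-- A set-valued conditional risk measure for vectors with domain `L^∞(mDom; ℝ^d)` and
values that are upper subsets of `M_t ⊆ L^∞(mVal; ℝ^d)`: cash invariance, monotonicity, and
finiteness at zero. -/
def IsCRMv {m0 : MeasurableSpace Ω} (mDom mVal : MeasurableSpace Ω) (P : @Measure Ω m0)
    (d md : ℕ) (R : (Ω → Fin d → ℝ) → Set (Ω → Fin d → ℝ)) : Prop :=
  (∀ X ∈ Linf mDom d, R X ⊆ Msp mVal P d md ∧ R X + MspP mVal P d md = R X) ∧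
  (∀ X ∈ Linf mDom d, ∀ mm ∈ Msp mVal P d md, R (X + mm) = (fun u => u - mm) '' R X) ∧
  (∀ X ∈ Linf mDom d, ∀ Y ∈ Linf mDom d, (∀ᵐ ω ∂P, ∀ i, X ω i ≤ Y ω i) → R X ⊆ R Y) ∧
  FinAtZero mVal P d md (R 0)

/-- The space `R^{∞,d}_t` of adapted, uniformly bounded processes starting at time `t`. -/
def procSp (T : ℕ) (F : Fin (T+1) → MeasurableSpace Ω) (d : ℕ) (t : Fin (T+1)) :
    Set (Fin (T+1) → Ω → Fin d → ℝ) :=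
  {X | (∀ s, Measurable[F s] (X s)) ∧ (∃ C : ℝ, ∀ s ω i, |X s ω i| ≤ C) ∧
    ∀ s, s < t → X s = 0}

/-- A set-valued conditional risk measure for processes at time `t`. -/
def IsCRMp {m0 : MeasurableSpace Ω} (T : ℕ) (F : Fin (T+1) → MeasurableSpace Ω)
    (P : @Measure Ω m0) (d md : ℕ) (t : Fin (T+1))
    (ρ : (Fin (T+1) → Ω → Fin d → ℝ) → Set (Ω → Fin d → ℝ)) : Prop :=
  (∀ X ∈ procSp T F d t, ρ X ⊆ Msp (F t) P d md ∧ ρ X + MspP (F t) P d md = ρ X) ∧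
  (∀ X ∈ procSp T F d t, ∀ mm ∈ Msp (F t) P d md,
    ρ (fun s ω i => X s ω i + (if t ≤ s then mm ω i else 0)) = (fun u => u - mm) '' ρ X) ∧
  (∀ X ∈ procSp T F d t, ∀ Y ∈ procSp T F d t,
    (∀ᵐ ω ∂P, ∀ s i, X s ω i ≤ Y s ω i) → ρ X ⊆ ρ Y) ∧
  FinAtZero (F t) P d md (ρ 0)

/-- Normalization of a set-valued risk measure. -/
def NormalizedOn {β γ : Type*} [Zero β] [Add γ] (D : Set β) (R : β → Set γ) : Prop :=
  ∀ X ∈ D, R X = R X + R 0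

/-- Conditional scaling of a random vector. -/
def scal {d : ℕ} (lam : Ω → ℝ) (u : Ω → Fin d → ℝ) : Ω → Fin d → ℝ := fun ω i => lam ω * u ω i

/-- Conditional convexity of a risk measure for vectors. -/
def CondConvexV {m0 : MeasurableSpace Ω} (mDom mVal : MeasurableSpace Ω) (P : @Measure Ω m0)
    (d : ℕ) (R : (Ω → Fin d → ℝ) → Set (Ω → Fin d → ℝ)) : Prop :=
  ∀ X ∈ Linf mDom d, ∀ Y ∈ Linf mDom d, ∀ lam : Ω → ℝ,
    Measurable[mVal] lam → (∀ᵐ ω ∂P, lam ω ∈ Set.Icc (0:ℝ) 1) →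
    scal lam '' R X + scal (fun ω => 1 - lam ω) '' R Y ⊆
      R (fun ω i => lam ω * X ω i + (1 - lam ω) * Y ω i)

/-- Conditional positive homogeneity of a risk measure for vectors. -/
def CondPosHomV {m0 : MeasurableSpace Ω} (mDom mVal : MeasurableSpace Ω) (P : @Measure Ω m0)
    (d : ℕ) (R : (Ω → Fin d → ℝ) → Set (Ω → Fin d → ℝ)) : Prop :=
  ∀ X ∈ Linf mDom d, ∀ lam : Ω → ℝ,
    Measurable[mVal] lam → (∃ C : ℝ, ∀ ω, |lam ω| ≤ C) → (∀ᵐ ω ∂P, 0 < lam ω) →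
    R (scal lam X) = scal lam '' R X

/-- Conditional convexity of a risk measure for processes. -/
def CondConvexP {m0 : MeasurableSpace Ω} (T : ℕ) (F : Fin (T+1) → MeasurableSpace Ω)
    (P : @Measure Ω m0) (d : ℕ) (t : Fin (T+1))
    (ρ : (Fin (T+1) → Ω → Fin d → ℝ) → Set (Ω → Fin d → ℝ)) : Prop :=
  ∀ X ∈ procSp T F d t, ∀ Y ∈ procSp T F d t, ∀ lam : Ω → ℝ,
    Measurable[F t] lam → (∀ᵐ ω ∂P, lam ω ∈ Set.Icc (0:ℝ) 1) →
    scal lam '' ρ X + scal (fun ω => 1 - lam ω) '' ρ Y ⊆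
      ρ (fun s ω i => lam ω * X s ω i + (1 - lam ω) * Y s ω i)

/-- Conditional positive homogeneity of a risk measure for processes. -/
def CondPosHomP {m0 : MeasurableSpace Ω} (T : ℕ) (F : Fin (T+1) → MeasurableSpace Ω)
    (P : @Measure Ω m0) (d : ℕ) (t : Fin (T+1))
    (ρ : (Fin (T+1) → Ω → Fin d → ℝ) → Set (Ω → Fin d → ℝ)) : Prop :=
  ∀ X ∈ procSp T F d t, ∀ lam : Ω → ℝ,
    Measurable[F t] lam → (∃ C : ℝ, ∀ ω, |lam ω| ≤ C) → (∀ᵐ ω ∂P, 0 < lam ω) →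
    ρ (fun s ω i => lam ω * X s ω i) = scal lam '' ρ X

/-! ### The optional filtration -/

/-- The optional σ-algebra `F̄` on `Ω̄ = Ω × 𝕋`, generated by the sets `A × {t}`, `A ∈ F_t`. -/
def optSigma (T : ℕ) (F : Fin (T+1) → MeasurableSpace Ω) :
    MeasurableSpace (Ω × Fin (T+1)) :=
  MeasurableSpace.generateFrom
    {S | ∃ t : Fin (T+1), ∃ A : Set Ω, MeasurableSet[F t] A ∧ S = A ×ˢ ({t} : Set (Fin (T+1)))}

/-- The optional filtration `F̄_t` on `Ω̄ = Ω × 𝕋`. -/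
def optFilt (T : ℕ) (F : Fin (T+1) → MeasurableSpace Ω) (t : Fin (T+1)) :
    MeasurableSpace (Ω × Fin (T+1)) :=
  MeasurableSpace.generateFrom
    {S | (∃ r : Fin (T+1), r < t ∧ ∃ A : Set Ω, MeasurableSet[F r] A ∧
            S = A ×ˢ ({r} : Set (Fin (T+1)))) ∨
         (∃ A : Set Ω, MeasurableSet[F t] A ∧ S = A ×ˢ (Set.Ici t))}

/-- The reference measure `P̄ = P ⊗ μ` on the optional σ-algebra, determined by
`Ē[X] = E[∑_t μ_t X_t]`. -/
def optMeas {m0 : MeasurableSpace Ω} (T : ℕ) (F : Fin (T+1) → MeasurableSpace Ω)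
    (P : @Measure Ω m0) (μ : Fin (T+1) → Ω → ℝ) : @Measure (Ω × Fin (T+1)) (optSigma T F) :=
  ∑ t : Fin (T+1),
    @Measure.map Ω (Ω × Fin (T+1)) m0 (optSigma T F) (fun ω => (ω, t))
      (P.withDensity fun ω => ENNReal.ofReal (μ t ω))

/-! ### Embeddings between the base space and the optional space -/

/-- `v ↦ v 1_{{s}}` embedding a random vector at time `s`. -/
def embAt (T : ℕ) {d : ℕ} (s : Fin (T+1)) (v : Ω → Fin d → ℝ) :
    Ω × Fin (T+1) → Fin d → ℝ :=
  fun x i => if x.2 = s then v x.1 i else 0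

/-- `u ↦ u 1_{𝕋_t}` embedding a random vector from time `t` onwards. -/
def embTail (T : ℕ) {d : ℕ} (t : Fin (T+1)) (u : Ω → Fin d → ℝ) :
    Ω × Fin (T+1) → Fin d → ℝ :=
  fun x i => if t ≤ x.2 then u x.1 i else 0

/-- `Y ↦ Y 1_{𝕋_t}` embedding a process into `L̄^∞`. -/
def embProc (T : ℕ) {d : ℕ} (t : Fin (T+1)) (Y : Fin (T+1) → Ω → Fin d → ℝ) :
    Ω × Fin (T+1) → Fin d → ℝ :=
  fun x i => if t ≤ x.2 then Y x.2 x.1 i else 0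

/-- `π_{t,T}(X)`, the process associated with `X ∈ L̄^∞`. -/
def procOf (T : ℕ) {d : ℕ} (t : Fin (T+1)) (X : Ω × Fin (T+1) → Fin d → ℝ) :
    Fin (T+1) → Ω → Fin d → ℝ :=
  fun s ω i => if t ≤ s then X (ω, s) i else 0

/-- `X ↦ X 1_{{s}}` on the optional space. -/
def cutAt (T : ℕ) {d : ℕ} (s : Fin (T+1)) (X : Ω × Fin (T+1) → Fin d → ℝ) :
    Ω × Fin (T+1) → Fin d → ℝ :=
  fun x i => if x.2 = s then X x i else 0

/-- `X ↦ X 1_{𝕋_t}` on the optional space. -/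
def cutTail (T : ℕ) {d : ℕ} (t : Fin (T+1)) (X : Ω × Fin (T+1) → Fin d → ℝ) :
    Ω × Fin (T+1) → Fin d → ℝ :=
  fun x i => if t ≤ x.2 then X x i else 0

/-- Evaluation `u ↦ u_s` of an optional random vector at time `s`. -/
def evalAt (T : ℕ) {d : ℕ} (s : Fin (T+1)) (u : Ω × Fin (T+1) → Fin d → ℝ) : Ω → Fin d → ℝ :=
  fun ω => u (ω, s)

/-- Time decomposability of a conditional risk measure on the optional space:
`R̄_t(X) = ∑_{s<t} R̄_t(X 1_{{s}}) 1_{{s}} + R̄_t(X 1_{𝕋_t}) 1_{𝕋_t}`. -/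
def TimeDecomp (T : ℕ) (F : Fin (T+1) → MeasurableSpace Ω) {d : ℕ} (t : Fin (T+1))
    (R : (Ω × Fin (T+1) → Fin d → ℝ) → Set (Ω × Fin (T+1) → Fin d → ℝ)) : Prop :=
  ∀ X ∈ Linf (optSigma T F) d,
    R X = (∑ s ∈ Iio t, (cutAt T s) '' R (cutAt T s X)) + (cutTail T t) '' R (cutTail T t X)

/-- The risk measure `R̄_t := ∑_{s<t} R_s((·)_s) 1_{{s}} + ρ_t(π_{t,T}(·)) 1_{𝕋_t}` on the
optional space built from a risk measure for processes and a family of risk measures for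
vectors. -/
def buildBar (T : ℕ) {d : ℕ} (t : Fin (T+1))
    (R : Fin (T+1) → (Ω → Fin d → ℝ) → Set (Ω → Fin d → ℝ))
    (ρ : (Fin (T+1) → Ω → Fin d → ℝ) → Set (Ω → Fin d → ℝ)) :
    (Ω × Fin (T+1) → Fin d → ℝ) → Set (Ω × Fin (T+1) → Fin d → ℝ) :=
  fun X => (∑ s ∈ Iio t, (embAt T s) '' R s (evalAt T s X)) +
    (embTail T t) '' ρ (procOf T t X)

/-- `ρ_t(Y) := R̄_t(Y 1_{𝕋_t})_t`, the risk measure for processes induced by a risk measure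
on the optional space. -/
def barToProc (T : ℕ) {d : ℕ} (t : Fin (T+1))
    (Rb : (Ω × Fin (T+1) → Fin d → ℝ) → Set (Ω × Fin (T+1) → Fin d → ℝ)) :
    (Fin (T+1) → Ω → Fin d → ℝ) → Set (Ω → Fin d → ℝ) :=
  fun Y => evalAt T t '' Rb (embProc T t Y)

/-- `R_s(Z) := R̄_t(Z 1_{{s}})_s`, the restricted risk measures for vectors induced by a risk
measure on the optional space. -/
def barToVec (T : ℕ) {d : ℕ} (t s : Fin (T+1))
    (Rb : (Ω × Fin (T+1) → Fin d → ℝ) → Set (Ω × Fin (T+1) → Fin d → ℝ)) :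
    (Ω → Fin d → ℝ) → Set (Ω → Fin d → ℝ) :=
  fun Z => evalAt T s '' Rb (embAt T s Z)

/-! ### Acceptance sets -/

/-- The acceptance set of a risk measure for vectors. -/
def accV {d : ℕ} {α : Type*} (D : Set (α → Fin d → ℝ))
    (R : (α → Fin d → ℝ) → Set (α → Fin d → ℝ)) : Set (α → Fin d → ℝ) :=
  {X | X ∈ D ∧ 0 ∈ R X}

/-- The acceptance set of a risk measure for processes. -/
def accP (T : ℕ) (F : Fin (T+1) → MeasurableSpace Ω) (d : ℕ) (t : Fin (T+1))
    (ρ : (Fin (T+1) → Ω → Fin d → ℝ) → Set (Ω → Fin d → ℝ)) :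
    Set (Fin (T+1) → Ω → Fin d → ℝ) :=
  {X | X ∈ procSp T F d t ∧ 0 ∈ ρ X}

/-! ### Multiportfolio time consistency -/

/-- Multiportfolio time consistency for a dynamic risk measure for processes. -/
def MPTCp (T : ℕ) (F : Fin (T+1) → MeasurableSpace Ω) (d : ℕ)
    (ρ : Fin (T+1) → (Fin (T+1) → Ω → Fin d → ℝ) → Set (Ω → Fin d → ℝ)) : Prop :=
  ∀ t s : Fin (T+1), t < s →
    ∀ X ∈ procSp T F d s, ∀ Z ∈ procSp T F d t, ∀ B ⊆ procSp T F d s,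
      ρ s X ⊆ (⋃ Y ∈ B, ρ s Y) →
      ρ t (fun r ω i => (if t ≤ r ∧ r < s then Z r ω i else 0) +
            (if s ≤ r then X r ω i else 0)) ⊆
        ⋃ Y ∈ B, ρ t (fun r ω i => (if t ≤ r ∧ r < s then Z r ω i else 0) +
            (if s ≤ r then Y r ω i else 0))

/-- The set `B = {(b_0,…,b_{s-1},b_s) : b_r ∈ B_r (r<s), b_s ∈ B_s}` of optional random
vectors, where a tuple denotes `∑_{r<s} b_r 1_{{r}} + b_s 1_{𝕋_s}`. -/
def tupleSet (T : ℕ) {d : ℕ} (s : Fin (T+1))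
    (Br : Fin (T+1) → Set (Ω → Fin d → ℝ)) (Bs : Set (Fin (T+1) → Ω → Fin d → ℝ)) :
    Set (Ω × Fin (T+1) → Fin d → ℝ) :=
  {Yb | ∃ b : Fin (T+1) → Ω → Fin d → ℝ, ∃ bs ∈ Bs, (∀ r, r < s → b r ∈ Br r) ∧
    Yb = fun x i => (if x.2 < s then b x.2 x.1 i else 0) + (if s ≤ x.2 then bs x.2 x.1 i else 0)}

/-- Multiportfolio time consistency for a dynamic risk measure for vectors on the optional
filtration. -/
def MPTCv (T : ℕ) (F : Fin (T+1) → MeasurableSpace Ω) {d : ℕ}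
    (Rb : Fin (T+1) → (Ω × Fin (T+1) → Fin d → ℝ) → Set (Ω × Fin (T+1) → Fin d → ℝ)) :
    Prop :=
  ∀ t s : Fin (T+1), t < s → ∀ X ∈ Linf (optSigma T F) d,
    ∀ Br : Fin (T+1) → Set (Ω → Fin d → ℝ), (∀ r, r < s → Br r ⊆ Linf (F r) d) →
    ∀ Bs ⊆ procSp T F d s,
      Rb s X ⊆ (⋃ Y ∈ tupleSet T s Br Bs, Rb s Y) →
      Rb t X ⊆ ⋃ Y ∈ tupleSet T s Br Bs, Rb t Y

/-- Joint multiportfolio time consistency of the pair `(ρ_t, (R^t_s)_{s<t})_{t∈𝕋}`. -/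
def JointMPTC (T : ℕ) (F : Fin (T+1) → MeasurableSpace Ω) (d : ℕ)
    (ρ : Fin (T+1) → (Fin (T+1) → Ω → Fin d → ℝ) → Set (Ω → Fin d → ℝ))
    (R : Fin (T+1) → Fin (T+1) → (Ω → Fin d → ℝ) → Set (Ω → Fin d → ℝ)) : Prop :=
  MPTCp T F d ρ ∧
  (∀ t s : Fin (T+1), t < s →
    ∀ Xr : Fin (T+1) → Ω → Fin d → ℝ, (∀ r, t ≤ r → r < s → Xr r ∈ Linf (F r) d) →
    ∀ Br : Fin (T+1) → Set (Ω → Fin d → ℝ), (∀ r, t ≤ r → r < s → Br r ⊆ Linf (F r) d) →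
    ∀ Z ∈ procSp T F d s,
      (∀ r, t ≤ r → r < s → R s r (Xr r) ⊆ ⋃ Y ∈ Br r, R s r Y) →
      ρ t (fun r ω i => (if t ≤ r ∧ r < s then Xr r ω i else 0) +
            (if s ≤ r then Z r ω i else 0)) ⊆
        ⋃ (Yr : Fin (T+1) → Ω → Fin d → ℝ) (_ : ∀ r, t ≤ r → r < s → Yr r ∈ Br r),
          ρ t (fun r ω i => (if t ≤ r ∧ r < s then Yr r ω i else 0) +
            (if s ≤ r then Z r ω i else 0))) ∧
  (∀ r t s : Fin (T+1), r < t → t < s → ∀ X ∈ Linf (F r) d, ∀ B ⊆ Linf (F r) d,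
    R s r X ⊆ (⋃ Y ∈ B, R s r Y) → R t r X ⊆ ⋃ Y ∈ B, R t r Y)

/-! ### Closedness and upper continuity -/

/-- The increments `Δa_s = a_s - a_{s-1}` (with `a_{-1} = 0`) of a process. -/
def dlt (T : ℕ) {d : ℕ} (a : Fin (T+1) → Ω → Fin d → ℝ) (s : Fin (T+1)) : Ω → Fin d → ℝ :=
  fun ω i => a s ω i - (if s = 0 then 0 else a (s - 1) ω i)

/-- The space `A^{1,d}_t` of adapted processes supported on `𝕋_t` with integrable total
variation. -/
def A1t {m0 : MeasurableSpace Ω} (T : ℕ) (F : Fin (T+1) → MeasurableSpace Ω)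
    (P : @Measure Ω m0) (d : ℕ) (t : Fin (T+1)) : Set (Fin (T+1) → Ω → Fin d → ℝ) :=
  {a | (∀ s, Measurable[F s] (a s)) ∧ (∀ s, s < t → a s = 0) ∧
    ∀ s i, Integrable (fun ω => dlt T a s ω i) P}

/-- The topology `σ(R^{∞,d}_t, A^{1,d}_t)` on the space of processes. -/
def procTop {m0 : MeasurableSpace Ω} (T : ℕ) (F : Fin (T+1) → MeasurableSpace Ω)
    (P : @Measure Ω m0) (d : ℕ) (t : Fin (T+1)) :
    TopologicalSpace (Fin (T+1) → Ω → Fin d → ℝ) :=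
  TopologicalSpace.induced
    (fun X => fun a : ↥(A1t T F P d t) =>
      ∫ ω, ∑ s ∈ Ici t, ∑ i, dlt T a.1 s ω i * X s ω i ∂P) Pi.topologicalSpace

/-- Closedness of the graph of a risk measure for processes in the product of
`σ(R^{∞,d}_t, A^{1,d}_t)` and the weak* topology. -/
def ClosedGraphP {m0 : MeasurableSpace Ω} (T : ℕ) (F : Fin (T+1) → MeasurableSpace Ω)
    (P : @Measure Ω m0) (d md : ℕ) (t : Fin (T+1))
    (ρ : (Fin (T+1) → Ω → Fin d → ℝ) → Set (Ω → Fin d → ℝ)) : Prop :=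
  IsClosedIn (@instTopologicalSpaceProd _ _ (procTop T F P d t) (wStar (F t) P d))
    (procSp T F d t ×ˢ Msp (F t) P d md)
    {p | p.1 ∈ procSp T F d t ∧ p.2 ∈ ρ p.1}

/-- Closedness of the graph of a risk measure for vectors in the product of the weak*
topologies. -/
def ClosedGraphV {m0 : MeasurableSpace Ω} (mDom mVal : MeasurableSpace Ω)
    (P : @Measure Ω m0) (d md : ℕ)
    (R : (Ω → Fin d → ℝ) → Set (Ω → Fin d → ℝ)) : Prop :=
  IsClosedIn (@instTopologicalSpaceProd _ _ (wStar mDom P d) (wStar mVal P d))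
    (Linf mDom d ×ˢ Msp mVal P d md)
    {p | p.1 ∈ Linf mDom d ∧ p.2 ∈ R p.1}

/-- The family `G(M_t; M_{t,+}) = {D ⊆ M_t : D = cl co (D + M_{t,+})}` of closed convex
upper subsets of `M_t`. -/
def Gsp {m0 : MeasurableSpace Ω} (m : MeasurableSpace Ω) (P : @Measure Ω m0) (d md : ℕ) :
    Set (Set (Ω → Fin d → ℝ)) :=
  {D | D ⊆ Msp m P d md ∧
    D = @closure _ (wStar m P d) (convexHull ℝ (D + MspP m P d md)) ∩ Msp m P d md}

/-- The family `G(M_t; -M_{t,+}) = {D ⊆ M_t : D = cl co (D - M_{t,+})}`. -/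
def GspMinus {m0 : MeasurableSpace Ω} (m : MeasurableSpace Ω) (P : @Measure Ω m0)
    (d md : ℕ) : Set (Set (Ω → Fin d → ℝ)) :=
  {D | D ⊆ Msp m P d md ∧
    D = @closure _ (wStar m P d) (convexHull ℝ (D - MspP m P d md)) ∩ Msp m P d md}

/-- `F_t`-conditional convexity of a set of random vectors. -/
def CondConvexSet {m0 : MeasurableSpace Ω} (m : MeasurableSpace Ω) (P : @Measure Ω m0)
    {d : ℕ} (D : Set (Ω → Fin d → ℝ)) : Prop :=
  ∀ u ∈ D, ∀ v ∈ D, ∀ lam : Ω → ℝ, Measurable[m] lam →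
    (∀ᵐ ω ∂P, lam ω ∈ Set.Icc (0:ℝ) 1) →
    (fun ω i => lam ω * u ω i + (1 - lam ω) * v ω i) ∈ D

/-- Conditional convex upper continuity of a risk measure for vectors. -/
def CUCv {m0 : MeasurableSpace Ω} (mDom mVal : MeasurableSpace Ω) (P : @Measure Ω m0)
    (d md : ℕ) (R : (Ω → Fin d → ℝ) → Set (Ω → Fin d → ℝ)) : Prop :=
  ∀ D ∈ GspMinus mVal P d md, CondConvexSet mVal P D →
    IsClosedIn (wStar mDom P d) (Linf mDom d) {X | X ∈ Linf mDom d ∧ (R X ∩ D).Nonempty}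

/-- Conditional convex upper continuity of a risk measure for processes. -/
def CUCp {m0 : MeasurableSpace Ω} (T : ℕ) (F : Fin (T+1) → MeasurableSpace Ω)
    (P : @Measure Ω m0) (d md : ℕ) (t : Fin (T+1))
    (ρ : (Fin (T+1) → Ω → Fin d → ℝ) → Set (Ω → Fin d → ℝ)) : Prop :=
  ∀ D ∈ GspMinus (F t) P d md, CondConvexSet (F t) P D →
    IsClosedIn (procTop T F P d t) (procSp T F d t)
      {X | X ∈ procSp T F d t ∧ (ρ X ∩ D).Nonempty}

/-! ### Dual variables and penalty functions -/

/-- The real-valued Radon–Nikodym density `dQ/dP`. -/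
def rnD {m0 : MeasurableSpace Ω} (P Q : @Measure Ω m0) : Ω → ℝ :=
  fun ω => (Q.rnDeriv P ω).toReal

/-- The conditional expectation operator `E_t = E[· | m]` (w.r.t. P). -/
def EE {m0 : MeasurableSpace Ω} (m : MeasurableSpace Ω) (P : @Measure Ω m0) (f : Ω → ℝ) :
    Ω → ℝ :=
  MeasureTheory.condExp m P f

/-- `ξ_{t,s}(Q) = E_s[dQ/dP] / E_t[dQ/dP]` on `{E_t[dQ/dP] > 0}` and `1` otherwise. -/
def xi {m0 : MeasurableSpace Ω} {T : ℕ} (F : Fin (T+1) → MeasurableSpace Ω)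
    (P Q : @Measure Ω m0) (t s : Fin (T+1)) : Ω → ℝ :=
  fun ω => if 0 < EE (F t) P (rnD P Q) ω
    then EE (F s) P (rnD P Q) ω / EE (F t) P (rnD P Q) ω
    else 1

/-- The `P`-a.s. version `E^Q_t[f] = E_t[ξ_{t,T}(Q) f]` of the `Q`-conditional expectation. -/
def EQ {m0 : MeasurableSpace Ω} {T : ℕ} (F : Fin (T+1) → MeasurableSpace Ω)
    (P Q : @Measure Ω m0) (t : Fin (T+1)) (f : Ω → ℝ) : Ω → ℝ :=
  EE (F t) P (fun ω => xi F P Q t (Fin.last T) ω * f ω)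

/-- The halfspace-type set `Γ_t(w) = {u ∈ L^∞_t : w^⊤ u ≥ 0 a.s.}`. -/
def Gam {m0 : MeasurableSpace Ω} (m : MeasurableSpace Ω) (P : @Measure Ω m0) (d : ℕ)
    (w : Ω → Fin d → ℝ) : Set (Ω → Fin d → ℝ) :=
  {u | u ∈ Linf m d ∧ ∀ᵐ ω ∂P, 0 ≤ ∑ i, w ω i * u ω i}

/-- Membership in the positive dual cone `M^*_{t,+} ⊆ L^1_t`. -/
def inMstarPlus {m0 : MeasurableSpace Ω} (m : MeasurableSpace Ω) (P : @Measure Ω m0)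
    (d md : ℕ) (w : Ω → Fin d → ℝ) : Prop :=
  w ∈ L1t m P d ∧ ∀ mm ∈ MspP m P d md, 0 ≤ ∫ ω, ∑ i, w ω i * mm ω i ∂P

/-- Membership in the orthogonal space `M_t^⊥ ⊆ L^1_t`. -/
def inMperp {m0 : MeasurableSpace Ω} (m : MeasurableSpace Ω) (P : @Measure Ω m0)
    (d md : ℕ) (w : Ω → Fin d → ℝ) : Prop :=
  w ∈ L1t m P d ∧ ∀ mm ∈ Msp m P d md, ∫ ω, ∑ i, w ω i * mm ω i ∂P = 0

/-- `M_t(P)`: probability measures absolutely continuous w.r.t. `P` agreeing with `P` on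
`F_t`. -/
def MtP {m0 : MeasurableSpace Ω} {T : ℕ} (F : Fin (T+1) → MeasurableSpace Ω)
    (P : @Measure Ω m0) (t : Fin (T+1)) : Set (@Measure Ω m0) :=
  {Q | IsProbabilityMeasure Q ∧ Q ≪ P ∧ ∀ A : Set Ω, MeasurableSet[F t] A → Q A = P A}

/-- The set `W_t` of dual variables for risk measures for processes. -/
def Wt {m0 : MeasurableSpace Ω} {T : ℕ} (F : Fin (T+1) → MeasurableSpace Ω)
    (P : @Measure Ω m0) (d md : ℕ) (t : Fin (T+1)) :
    Set ((Fin (T+1) → Fin d → @Measure Ω m0) × (Fin (T+1) → Ω → Fin d → ℝ)) :=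
  {Qw | (∀ s, t ≤ s → ∀ i, Qw.1 s i ∈ MtP F P t) ∧
    (∀ s, t ≤ s → inMstarPlus (F t) P d md (Qw.2 s) ∧ ¬ inMperp (F t) P d md (Qw.2 s)) ∧
    (∀ s, t ≤ s → (∀ᵐ ω ∂P, ∀ i, 0 ≤ Qw.2 s ω i * xi F P (Qw.1 s i) t s ω) ∧
      ∀ i, Integrable (fun ω => Qw.2 s ω i * xi F P (Qw.1 s i) t s ω) P)}

/-- The minimal penalty function `α_t(Q,w)` of a risk measure for processes with acceptance
set `At`. -/
def alphaP {m0 : MeasurableSpace Ω} (T : ℕ) (F : Fin (T+1) → MeasurableSpace Ω)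
    (P : @Measure Ω m0) (d md : ℕ) (t : Fin (T+1))
    (At : Set (Fin (T+1) → Ω → Fin d → ℝ))
    (Q : Fin (T+1) → Fin d → @Measure Ω m0) (w : Fin (T+1) → Ω → Fin d → ℝ) :
    Set (Ω → Fin d → ℝ) :=
  ⋂ Y ∈ At, ∑ s ∈ Ici t,
    (({fun ω i => EQ F P (Q s i) t (fun ω' => - Y s ω' i) ω} + Gam (F t) P d (w s)) ∩
      Msp (F t) P d md)

/-- The minimal penalty function of a (restricted) risk measure for vectors with acceptance
set `A`. -/
def alphaV {m0 : MeasurableSpace Ω} (m : MeasurableSpace Ω) (P : @Measure Ω m0) (d md : ℕ)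
    (A : Set (Ω → Fin d → ℝ)) (v : Ω → Fin d → ℝ) : Set (Ω → Fin d → ℝ) :=
  ⋂ Z ∈ A, (({fun ω i => - Z ω i} + Gam m P d v) ∩ Msp m P d md)

/-- Minkowski subtraction `A -• B = {m ∈ Mt : B + {m} ⊆ A}` within `Mt`. -/
def mSub {γ : Type*} [Add γ] (Mt A B : Set γ) : Set γ :=
  {mm | mm ∈ Mt ∧ ∀ b ∈ B, b + mm ∈ A}

/-- The maximal set of dual variables `W_t^{max}` for coherent risk measures for processes. -/
def WtMax {m0 : MeasurableSpace Ω} (T : ℕ) (F : Fin (T+1) → MeasurableSpace Ω)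
    (P : @Measure Ω m0) (d md : ℕ) (t : Fin (T+1))
    (At : Set (Fin (T+1) → Ω → Fin d → ℝ)) :
    Set ((Fin (T+1) → Fin d → @Measure Ω m0) × (Fin (T+1) → Ω → Fin d → ℝ)) :=
  {Qw | Qw ∈ Wt F P d md t ∧ ∀ Z ∈ At,
    ∀ᵐ ω ∂P, 0 ≤ ∑ s ∈ Ici t, ∑ i, Qw.2 s ω i * EQ F P (Qw.1 s i) t (fun ω' => Z s ω' i) ω}

/-! ### Dual variables on the optional space -/

/-- `ξ̄_{t,s}(Q̄)` on the optional space. -/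
def xiBar {T : ℕ} (F : Fin (T+1) → MeasurableSpace Ω)
    (Pb Qb : @Measure (Ω × Fin (T+1)) (optSigma T F)) (t s : Fin (T+1)) :
    Ω × Fin (T+1) → ℝ :=
  fun x => if 0 < EE (optFilt T F t) Pb (rnD Pb Qb) x
    then EE (optFilt T F s) Pb (rnD Pb Qb) x / EE (optFilt T F t) Pb (rnD Pb Qb) x
    else 1

/-- `Ē^{Q̄}_t[f] = Ē_t[ξ̄_{t,T}(Q̄) f]`, the `P̄`-a.s. version of the `Q̄`-conditional
expectation on the optional space. -/
def EQbar {T : ℕ} (F : Fin (T+1) → MeasurableSpace Ω)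
    (Pb Qb : @Measure (Ω × Fin (T+1)) (optSigma T F)) (t : Fin (T+1))
    (f : Ω × Fin (T+1) → ℝ) : Ω × Fin (T+1) → ℝ :=
  EE (optFilt T F t) Pb (fun y => xiBar F Pb Qb t (Fin.last T) y * f y)

/-- The process `w̄^T_t(Q̄, w̄)`. -/
def wBarT {m0 : MeasurableSpace Ω} (T : ℕ) (F : Fin (T+1) → MeasurableSpace Ω)
    (P : @Measure Ω m0) (μ : Fin (T+1) → Ω → ℝ) {d : ℕ} (t : Fin (T+1))
    (Qb : Fin d → @Measure (Ω × Fin (T+1)) (optSigma T F))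
    (wb : Ω × Fin (T+1) → Fin d → ℝ) : Ω × Fin (T+1) → Fin d → ℝ :=
  fun x i => if x.2 < t then wb x i
    else wb (x.1, t) i * xiBar F (optMeas T F P μ) (Qb i) t (Fin.last T) x

/-- The set `W̄_t` of dual variables for risk measures for vectors on the optional
filtration. -/
def WtBar {m0 : MeasurableSpace Ω} (T : ℕ) (F : Fin (T+1) → MeasurableSpace Ω)
    (P : @Measure Ω m0) (μ : Fin (T+1) → Ω → ℝ) (d md : ℕ) (t : Fin (T+1)) :
    Set ((Fin d → @Measure (Ω × Fin (T+1)) (optSigma T F)) × (Ω × Fin (T+1) → Fin d → ℝ)) :=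
  {Qw | (∀ i, IsProbabilityMeasure (Qw.1 i) ∧ Qw.1 i ≪ optMeas T F P μ ∧
      ∀ S : Set (Ω × Fin (T+1)), MeasurableSet[optFilt T F t] S →
        Qw.1 i S = optMeas T F P μ S) ∧
    (inMstarPlus (optFilt T F t) (optMeas T F P μ) d md Qw.2 ∧
      ¬ inMperp (optFilt T F t) (optMeas T F P μ) d md Qw.2) ∧
    (∀ᵐ x ∂(optMeas T F P μ), ∀ i, 0 ≤ wBarT T F P μ t Qw.1 Qw.2 x i) ∧
    (∀ i, Integrable (fun x => wBarT T F P μ t Qw.1 Qw.2 x i) (optMeas T F P μ))}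

/-- The minimal penalty function `ᾱ_t(Q̄, w̄)` of a risk measure for vectors on the optional
filtration with acceptance set `Ab`. -/
def alphaBar {m0 : MeasurableSpace Ω} (T : ℕ) (F : Fin (T+1) → MeasurableSpace Ω)
    (P : @Measure Ω m0) (μ : Fin (T+1) → Ω → ℝ) (d md : ℕ) (t : Fin (T+1))
    (Ab : Set (Ω × Fin (T+1) → Fin d → ℝ))
    (Qb : Fin d → @Measure (Ω × Fin (T+1)) (optSigma T F))
    (wb : Ω × Fin (T+1) → Fin d → ℝ) : Set (Ω × Fin (T+1) → Fin d → ℝ) :=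
  ⋂ Y ∈ Ab,
    (({fun x i => EQbar F (optMeas T F P μ) (Qb i) t (fun y => - Y y i) x} +
        Gam (optFilt T F t) (optMeas T F P μ) d wb) ∩
      Msp (optFilt T F t) (optMeas T F P μ) d md)

/-- The dual variables `(Q̂, w) = W_t(Q ⊗ ψ, w̄)`: the measure components. -/
def hatQ {m0 : MeasurableSpace Ω} {T : ℕ} (F : Fin (T+1) → MeasurableSpace Ω)
    (P : @Measure Ω m0) (μ : Fin (T+1) → Ω → ℝ) {d : ℕ}
    (Q : Fin d → @Measure Ω m0) (ψ : Fin d → Fin (T+1) → Ω → ℝ) (t : Fin (T+1)) :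
    Fin (T+1) → Fin d → @Measure Ω m0 :=
  fun s i => P.withDensity fun ω => ENNReal.ofReal (
    if 0 < EQ F P (Q i) t (ψ i s) ω
    then ψ i s ω / EQ F P (Q i) t (ψ i s) ω * xi F P (Q i) t s ω
    else μ s ω / EE (F t) P (μ s) ω)

/-- The dual variables `(Q̂, w) = W_t(Q ⊗ ψ, w̄)`: the weight components. -/
def hatw {m0 : MeasurableSpace Ω} {T : ℕ} (F : Fin (T+1) → MeasurableSpace Ω)
    (P : @Measure Ω m0) (μ : Fin (T+1) → Ω → ℝ) {d : ℕ}
    (Q : Fin d → @Measure Ω m0) (ψ : Fin d → Fin (T+1) → Ω → ℝ) (t : Fin (T+1))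
    (wb : Ω × Fin (T+1) → Fin d → ℝ) : Fin (T+1) → Ω → Fin d → ℝ :=
  fun s ω i => EQ F P (Q i) t (ψ i s) ω / (1 - ∑ r ∈ Iio t, μ r ω) * wb (ω, t) i

/-- The weight component `w̄` of `W̄_t(Q,w) = (Q̄,w̄)`. -/
def barw (T : ℕ) {d : ℕ} (t : Fin (T+1)) (w : Fin (T+1) → Ω → Fin d → ℝ) :
    Ω × Fin (T+1) → Fin d → ℝ :=
  fun x i => if t ≤ x.2 then ∑ s ∈ Ici t, (if 0 < w s x.1 i then w s x.1 i else 0) else 0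

/-- The measure component `Q̄` of `W̄_t(Q,w) = (Q̄,w̄)`, defined via its density w.r.t. `P̄`. -/
def barQ {m0 : MeasurableSpace Ω} (T : ℕ) (F : Fin (T+1) → MeasurableSpace Ω)
    (P : @Measure Ω m0) (μ : Fin (T+1) → Ω → ℝ) {d : ℕ}
    (Q : Fin (T+1) → Fin d → @Measure Ω m0) (w : Fin (T+1) → Ω → Fin d → ℝ)
    (t : Fin (T+1)) : Fin d → @Measure (Ω × Fin (T+1)) (optSigma T F) :=
  fun i => (optMeas T F P μ).withDensity fun x => ENNReal.ofReal (
    if x.2 < t then 1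
    else ((1 - ∑ r ∈ Iio t, μ r x.1) / μ x.2 x.1) *
      (if 0 < barw T t w (x.1, t) i then w x.2 x.1 i / barw T t w (x.1, t) i else 1) *
      xi F P (Q x.2 i) t x.2 x.1)

end RMPaper


namespace RMPaper
open MeasureTheory Finset Pointwise Filter
open scoped ENNReal NNReal

open RMPaper

variable {Ω : Type} {T : ℕ}

/-- σ-algebra of sets all of whose time-slices are measurable. -/
def sliceMS (F : Fin (T+1) → MeasurableSpace Ω) : MeasurableSpace (Ω × Fin (T+1)) where
  MeasurableSet' S := ∀ r, MeasurableSet[F r] ((fun ω => (ω, r)) ⁻¹' S)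
  measurableSet_empty := fun r => by simp
  measurableSet_compl := fun S hS r => by
    rw [Set.preimage_compl]; exact (hS r).compl
  measurableSet_iUnion := fun f hf r => by
    rw [Set.preimage_iUnion]; exact MeasurableSet.iUnion fun n => hf n r

/-- σ-algebra of sets whose pre-`t` slices are `F r`-measurable and whose tail slices
agree with the `F t`-measurable `t`-slice. -/
def filtMS (F : Fin (T+1) → MeasurableSpace Ω) (t : Fin (T+1)) :
    MeasurableSpace (Ω × Fin (T+1)) where
  MeasurableSet' S := (∀ r, r < t → MeasurableSet[F r] ((fun ω => (ω, r)) ⁻¹' S)) ∧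
    MeasurableSet[F t] ((fun ω => (ω, t)) ⁻¹' S) ∧
    ∀ r, t ≤ r → (fun ω => (ω, r)) ⁻¹' S = (fun ω => (ω, t)) ⁻¹' S
  measurableSet_empty := ⟨fun r _ => by simp, by simp, fun r _ => by simp⟩
  measurableSet_compl := fun S hS => by
    refine ⟨fun r hr => ?_, ?_, fun r hr => ?_⟩
    · rw [Set.preimage_compl]; exact (hS.1 r hr).compl
    · rw [Set.preimage_compl]; exact hS.2.1.compl
    · rw [Set.preimage_compl, Set.preimage_compl, hS.2.2 r hr]
  measurableSet_iUnion := fun f hf => by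
    refine ⟨fun r hr => ?_, ?_, fun r hr => ?_⟩
    · rw [Set.preimage_iUnion]; exact MeasurableSet.iUnion fun n => (hf n).1 r hr
    · rw [Set.preimage_iUnion]; exact MeasurableSet.iUnion fun n => (hf n).2.1
    · rw [Set.preimage_iUnion, Set.preimage_iUnion]
      exact Set.iUnion_congr fun n => (hf n).2.2 r hr

variable {F : Fin (T+1) → MeasurableSpace Ω} {t : Fin (T+1)}

lemma optSigma_eq : optSigma T F = sliceMS F := by
  refine le_antisymm (MeasurableSpace.generateFrom_le ?_) ?_
  · rintro S ⟨r, A, hA, rfl⟩ r'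
    by_cases h : r' = r
    · subst h
      have : (fun ω => (ω, r')) ⁻¹' (A ×ˢ ({r'} : Set (Fin (T+1)))) = A := by
        ext ω; simp
      rw [this]; exact hA
    · have : (fun ω => (ω, r')) ⁻¹' (A ×ˢ ({r} : Set (Fin (T+1)))) = ∅ :=
        Set.eq_empty_iff_forall_notMem.mpr fun ω hω => h hω.2
      rw [this]; exact @MeasurableSet.empty _ (F r')
  · intro S hS
    have hrep : S = ⋃ r : Fin (T+1),
        (((fun ω => (ω, r)) ⁻¹' S) ×ˢ ({r} : Set (Fin (T+1)))) := by
      ext ⟨ω, r⟩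
      simp only [Set.mem_iUnion, Set.mem_prod, Set.mem_preimage, Set.mem_singleton_iff]
      constructor
      · intro h; exact ⟨r, h, rfl⟩
      · rintro ⟨r', h, rfl⟩; exact h
    rw [hrep]
    exact MeasurableSet.iUnion fun r =>
      MeasurableSpace.measurableSet_generateFrom ⟨r, _, hS r, rfl⟩

lemma optFilt_eq : optFilt T F t = filtMS F t := by
  refine le_antisymm (MeasurableSpace.generateFrom_le ?_) ?_
  · rintro S (⟨r, hrt, A, hA, rfl⟩ | ⟨A, hA, rfl⟩)
    · refine ⟨fun r' hr' => ?_, ?_, fun r' hr' => ?_⟩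
      · by_cases h : r' = r
        · subst h
          have : (fun ω => (ω, r')) ⁻¹' (A ×ˢ ({r'} : Set (Fin (T+1)))) = A := by
            ext ω; simp
          rw [this]; exact hA
        · have : (fun ω => (ω, r')) ⁻¹' (A ×ˢ ({r} : Set (Fin (T+1)))) = ∅ :=
            Set.eq_empty_iff_forall_notMem.mpr fun ω hω => h hω.2
          rw [this]; exact @MeasurableSet.empty _ (F r')
      · have : (fun ω => (ω, t)) ⁻¹' (A ×ˢ ({r} : Set (Fin (T+1)))) = ∅ :=
          Set.eq_empty_iff_forall_notMem.mpr fun ω hω => hrt.ne' hω.2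
        rw [this]; exact @MeasurableSet.empty _ (F t)
      · have h1 : (fun ω => (ω, r')) ⁻¹' (A ×ˢ ({r} : Set (Fin (T+1)))) = ∅ :=
          Set.eq_empty_iff_forall_notMem.mpr fun ω hω => (hrt.trans_le hr').ne' hω.2
        have h2 : (fun ω => (ω, t)) ⁻¹' (A ×ˢ ({r} : Set (Fin (T+1)))) = ∅ :=
          Set.eq_empty_iff_forall_notMem.mpr fun ω hω => hrt.ne' hω.2
        rw [h1, h2]
    · refine ⟨fun r' hr' => ?_, ?_, fun r' hr' => ?_⟩
      · have : (fun ω => (ω, r')) ⁻¹' (A ×ˢ Set.Ici t) = ∅ :=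
          Set.eq_empty_iff_forall_notMem.mpr fun ω hω => not_le.mpr hr' hω.2
        rw [this]; exact @MeasurableSet.empty _ (F r')
      · have : (fun ω => (ω, t)) ⁻¹' (A ×ˢ Set.Ici t) = A := by
          ext ω; simp
        rw [this]; exact hA
      · have h1 : (fun ω => (ω, r')) ⁻¹' (A ×ˢ Set.Ici t) = A := by
          ext ω; simp [Set.mem_Ici, hr']
        have h2 : (fun ω => (ω, t)) ⁻¹' (A ×ˢ Set.Ici t) = A := by
          ext ω; simp
        rw [h1, h2]
  · intro S hS
    obtain ⟨h1, h2, h3⟩ := hS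
    have hrep : S = (⋃ r : Fin (T+1), if r < t then
        (((fun ω => (ω, r)) ⁻¹' S) ×ˢ ({r} : Set (Fin (T+1)))) else ∅) ∪
        (((fun ω => (ω, t)) ⁻¹' S) ×ˢ Set.Ici t) := by
      ext ⟨ω, r⟩
      simp only [Set.mem_union, Set.mem_iUnion, Set.mem_prod, Set.mem_preimage,
        Set.mem_singleton_iff, Set.mem_Ici]
      constructor
      · intro h
        rcases lt_or_ge r t with hr | hr
        · left; exact ⟨r, by simp [hr, h]⟩
        · right
          refine ⟨?_, hr⟩
          have := h3 r hr
          have hmem : ω ∈ (fun ω => (ω, r)) ⁻¹' S := h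
          rwa [this] at hmem
      · rintro (⟨r', h⟩ | ⟨h, hr⟩)
        · by_cases hrt : r' < t
          · simp only [if_pos hrt, Set.mem_prod, Set.mem_preimage,
              Set.mem_singleton_iff] at h
            rcases h with ⟨h, rfl⟩; exact h
          · simp [if_neg hrt] at h
        · have := h3 r hr
          have : ω ∈ (fun ω => (ω, r)) ⁻¹' S := by rw [this]; exact h
          exact this
    rw [hrep]
    refine MeasurableSet.union (MeasurableSet.iUnion fun r => ?_)
      (MeasurableSpace.measurableSet_generateFrom (Or.inr ⟨_, h2, rfl⟩))
    by_cases hrt : r < t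
    · rw [if_pos hrt]
      exact MeasurableSpace.measurableSet_generateFrom (Or.inl ⟨r, hrt, _, h1 r hrt, rfl⟩)
    · rw [if_neg hrt]; exact @MeasurableSet.empty _ (optFilt T F t)

lemma measurable_optSigma_iff {γ : Type*} [MeasurableSpace γ] {u : Ω × Fin (T+1) → γ} :
    Measurable[optSigma T F] u ↔ ∀ r, Measurable[F r] (fun ω => u (ω, r)) := by
  rw [optSigma_eq]
  constructor
  · intro h r B hB; exact h hB r
  · intro h B hB r; exact h r hB

lemma measurable_optFilt_iff {γ : Type*} [MeasurableSpace γ] [MeasurableSingletonClass γ]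
    {u : Ω × Fin (T+1) → γ} :
    Measurable[optFilt T F t] u ↔
      ((∀ r, r < t → Measurable[F r] (fun ω => u (ω, r))) ∧
        (Measurable[F t] (fun ω => u (ω, t))) ∧
        ∀ r, t ≤ r → ∀ ω, u (ω, r) = u (ω, t)) := by
  rw [optFilt_eq]
  constructor
  · intro h
    refine ⟨fun r hr B hB => (h hB).1 r hr, fun B hB => (h hB).2.1, fun r hr ω => ?_⟩
    have hs := (h (measurableSet_singleton (u (ω, t)))).2.2 r hr
    have hω : ω ∈ (fun ω => (ω, t)) ⁻¹' (u ⁻¹' {u (ω, t)}) := rfl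
    rw [← hs] at hω
    exact hω
  · rintro ⟨hpre, ht, htail⟩ B hB
    refine ⟨fun r hr => hpre r hr hB, ht hB, fun r hr => ?_⟩
    ext ω
    simp only [Set.mem_preimage, htail r hr ω]

lemma optFilt_le_optSigma (hFmono : Monotone F) : optFilt T F t ≤ optSigma T F := by
  rw [optFilt_eq, optSigma_eq]
  intro S hS r
  rcases lt_or_ge r t with hr | hr
  · exact hS.1 r hr
  · rw [hS.2.2 r hr]; exact hFmono hr _ hS.2.1

lemma measurableSet_optFilt_iff {S : Set (Ω × Fin (T+1))} :
    MeasurableSet[optFilt T F t] S ↔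
      ((∀ r, r < t → MeasurableSet[F r] ((fun ω => (ω, r)) ⁻¹' S)) ∧
        MeasurableSet[F t] ((fun ω => (ω, t)) ⁻¹' S) ∧
        ∀ r, t ≤ r → (fun ω => (ω, r)) ⁻¹' S = (fun ω => (ω, t)) ⁻¹' S) := by
  rw [optFilt_eq]; exact Iff.rfl

lemma measurableSet_optSigma_iff {S : Set (Ω × Fin (T+1))} :
    MeasurableSet[optSigma T F] S ↔ ∀ r, MeasurableSet[F r] ((fun ω => (ω, r)) ⁻¹' S) := by
  rw [optSigma_eq]; exact Iff.rfl


section Meas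

variable [m0 : MeasurableSpace Ω] {P : @Measure Ω m0} {μ : Fin (T+1) → Ω → ℝ}
  {F : Fin (T+1) → MeasurableSpace Ω}

lemma measurable_mkPair (hFle : ∀ r, F r ≤ m0) (r : Fin (T+1)) :
    @Measurable Ω (Ω × Fin (T+1)) m0 (optSigma T F) (fun ω => (ω, r)) := by
  intro S hS
  exact hFle r _ (measurableSet_optSigma_iff.mp hS r)

lemma optMeas_apply (hFle : ∀ r, F r ≤ m0) {S : Set (Ω × Fin (T+1))}
    (hS : MeasurableSet[optSigma T F] S) :
    optMeas T F P μ S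
      = ∑ r, P.withDensity (fun ω => ENNReal.ofReal (μ r ω)) ((fun ω => (ω, r)) ⁻¹' S) := by
  rw [optMeas, Measure.finset_sum_apply]
  exact Finset.sum_congr rfl fun r _ => Measure.map_apply (measurable_mkPair hFle r) hS

lemma P_null_of_wd_null (hmr : @Measurable Ω ℝ m0 _ (μ r)) (hpos : ∀ᵐ ω ∂P, 0 < μ r ω)
    {A : Set Ω} (hA : MeasurableSet[m0] A)
    (h : P.withDensity (fun ω => ENNReal.ofReal (μ r ω)) A = 0) : P A = 0 := by
  rw [withDensity_apply _ hA,
    setLIntegral_eq_zero_iff hA (fun s hs => hmr.ennreal_ofReal hs)] at h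
  have hA0 : ∀ᵐ ω ∂P, ω ∉ A := by
    filter_upwards [h, hpos] with ω h1 h2 hmem
    exact (ENNReal.ofReal_pos.mpr h2).ne' (h1 hmem)
  exact measure_eq_zero_iff_ae_notMem.mpr hA0


lemma optMeas_null_of_slices (hFle : ∀ r, F r ≤ m0) {S : Set (Ω × Fin (T+1))}
    (hS : MeasurableSet[optSigma T F] S)
    (h : ∀ r, P ((fun ω => (ω, r)) ⁻¹' S) = 0) : optMeas T F P μ S = 0 := by
  rw [optMeas_apply hFle hS]
  refine Finset.sum_eq_zero fun r _ => ?_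
  rw [withDensity_apply _ (hFle r _ (measurableSet_optSigma_iff.mp hS r))]
  exact setLIntegral_measure_zero _ _ (h r)

lemma aeOpt (hFle : ∀ r, F r ≤ m0) {p : Ω × Fin (T+1) → Prop}
    (hm : MeasurableSet[optSigma T F] {x | ¬ p x})
    (h : ∀ r, ∀ᵐ ω ∂P, p (ω, r)) : ∀ᵐ x ∂(optMeas T F P μ), p x := by
  rw [ae_iff]
  refine optMeas_null_of_slices hFle hm fun r => ?_
  exact ae_iff.mp (h r)

lemma aeP_of_aeOpt (hFle : ∀ r, F r ≤ m0) (hmr : ∀ r, @Measurable Ω ℝ m0 _ (μ r))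
    (hpos : ∀ r, ∀ᵐ ω ∂P, 0 < μ r ω) {p : Ω × Fin (T+1) → Prop}
    (h : ∀ᵐ x ∂(optMeas T F P μ), p x) (r : Fin (T+1)) : ∀ᵐ ω ∂P, p (ω, r) := by
  letI : MeasurableSpace (Ω × Fin (T+1)) := optSigma T F
  obtain ⟨S, hsub, hSm, hS0⟩ := exists_measurable_superset_of_null (ae_iff.mp h)
  rw [optMeas_apply hFle hSm] at hS0
  have hterm := (Finset.sum_eq_zero_iff.mp hS0) r (Finset.mem_univ r)
  have hr : P ((fun ω => (ω, r)) ⁻¹' S) = 0 :=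
    P_null_of_wd_null (hmr r) (hpos r) (hFle r _ (measurableSet_optSigma_iff.mp hSm r)) hterm
  refine ae_iff.mpr (measure_mono_null ?_ hr)
  intro ω hω
  exact hsub hω

lemma map_le_optMeas (r : Fin (T+1)) :
    @Measure.map Ω (Ω × Fin (T+1)) m0 (optSigma T F) (fun ω => (ω, r))
      (P.withDensity fun ω => ENNReal.ofReal (μ r ω)) ≤ optMeas T F P μ := by
  rw [optMeas]
  refine Measure.le_iff.mpr fun s hs => ?_
  rw [Measure.finset_sum_apply]
  exact Finset.single_le_sum (f := fun r' =>
    (@Measure.map Ω (Ω × Fin (T+1)) m0 (optSigma T F) (fun ω => (ω, r'))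
      (P.withDensity fun ω => ENNReal.ofReal (μ r' ω))) s)
    (fun i _ => zero_le) (Finset.mem_univ r)

lemma integrable_slice (hFle : ∀ r, F r ≤ m0) (hmr : ∀ r, @Measurable Ω ℝ m0 _ (μ r))
    {f : Ω × Fin (T+1) → ℝ} (hf : Integrable f (optMeas T F P μ)) (r : Fin (T+1)) :
    Integrable (fun ω => max (μ r ω) 0 * f (ω, r)) P := by
  letI : MeasurableSpace (Ω × Fin (T+1)) := optSigma T F
  have h1 : Integrable f (@Measure.map Ω (Ω × Fin (T+1)) m0 (optSigma T F)
      (fun ω => (ω, r)) (P.withDensity fun ω => ENNReal.ofReal (μ r ω))) :=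
    hf.mono_measure (map_le_optMeas r)
  have h2 : Integrable (fun ω => f (ω, r))
      (P.withDensity fun ω => ENNReal.ofReal (μ r ω)) := by
    rw [integrable_map_measure h1.aestronglyMeasurable
      (measurable_mkPair hFle r).aemeasurable] at h1
    exact h1
  have h2' : Integrable (fun ω => f (ω, r))
      (P.withDensity fun ω => ((μ r ω).toNNReal : ℝ≥0∞)) := h2
  have hmeas : Measurable fun ω => (μ r ω).toNNReal := measurable_real_toNNReal.comp (hmr r)
  have h3 := (integrable_withDensity_iff_integrable_smul hmeas).mp h2'
  simpa [NNReal.smul_def, Real.coe_toNNReal'] using h3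

lemma integral_opt (hFle : ∀ r, F r ≤ m0) (hmr : ∀ r, @Measurable Ω ℝ m0 _ (μ r))
    {f : Ω × Fin (T+1) → ℝ} (hf : Integrable f (optMeas T F P μ)) :
    ∫ x, f x ∂(optMeas T F P μ) = ∑ r, ∫ ω, max (μ r ω) 0 * f (ω, r) ∂P := by
  letI : MeasurableSpace (Ω × Fin (T+1)) := optSigma T F
  rw [optMeas, integral_finset_sum_measure (fun r _ => hf.mono_measure (map_le_optMeas r))]
  refine Finset.sum_congr rfl fun r _ => ?_
  rw [integral_map (measurable_mkPair hFle r).aemeasurable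
    (hf.mono_measure (map_le_optMeas r)).aestronglyMeasurable]
  have : (P.withDensity fun ω => ENNReal.ofReal (μ r ω))
      = P.withDensity fun ω => ((μ r ω).toNNReal : ℝ≥0∞) := rfl
  have hmeas : Measurable fun ω => (μ r ω).toNNReal := measurable_real_toNNReal.comp (hmr r)
  rw [this, integral_withDensity_eq_integral_smul hmeas]
  simp [NNReal.smul_def, Real.coe_toNNReal']


end Meas

section Emb
variable [m0 : MeasurableSpace Ω] {P : @Measure Ω m0} {μ : Fin (T+1) → Ω → ℝ}
  {F : Fin (T+1) → MeasurableSpace Ω} {t s r : Fin (T+1)} {d md : ℕ}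
  {u : Ω × Fin (T+1) → Fin d → ℝ} {v : Ω → Fin d → ℝ}

lemma measurableSet_inM_pre {α : Type*} {m : MeasurableSpace α} {u : α → Fin d → ℝ}
    (hu : Measurable[m] u) : MeasurableSet[m] {x | inM d md (u x)} := by
  have h : {x | inM d md (u x)} = ⋂ i : Fin d, {x | md ≤ (i : ℕ) → u x i = 0} := by
    ext x; simp [inM, Set.mem_iInter]
  rw [h]
  refine MeasurableSet.iInter fun i => ?_
  by_cases hmd : md ≤ (i : ℕ)
  · have h2 : {x | md ≤ (i:ℕ) → u x i = 0} = (fun x => u x i) ⁻¹' {0} := by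
      ext x; simp [hmd]
    rw [h2]
    exact (measurable_pi_apply i).comp hu (measurableSet_singleton 0)
  · have h2 : {x | md ≤ (i:ℕ) → u x i = 0} = Set.univ := by ext x; simp [hmd]
    rw [h2]; exact MeasurableSet.univ

lemma measurableSet_nonneg_pre {α : Type*} {m : MeasurableSpace α} {u : α → Fin d → ℝ}
    (hu : Measurable[m] u) : MeasurableSet[m] {x | ∀ i, 0 ≤ u x i} := by
  have h : {x | ∀ i, 0 ≤ u x i} = ⋂ i : Fin d, (fun x => u x i) ⁻¹' (Set.Ici 0) := by
    ext x; simp [Set.mem_iInter, Set.mem_Ici]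
  rw [h]
  exact MeasurableSet.iInter fun i => ((measurable_pi_apply i).comp hu) measurableSet_Ici

lemma measurable_embTail (hv : Measurable[F t] v) :
    Measurable[optFilt T F t] (embTail T t v) := by
  refine measurable_optFilt_iff.mpr ⟨fun r hr => ?_, ?_, fun r hr ω => ?_⟩
  · have h : (fun ω => embTail T t v (ω, r)) = fun _ _ => (0:ℝ) := by
      funext ω i; simp [embTail, not_le.mpr hr]
    rw [h]; exact measurable_const
  · have h : (fun ω => embTail T t v (ω, t)) = v := by funext ω i; simp [embTail]
    rw [h]; exact hv
  · funext i; simp [embTail, hr]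

/-- `v 1_{[s,T]}`. -/
def embFrom (T : ℕ) {d : ℕ} (s : Fin (T+1)) (v : Ω → Fin d → ℝ) :
    Ω × Fin (T+1) → Fin d → ℝ := fun x i => if s ≤ x.2 then v x.1 i else 0

lemma measurable_embFrom (hFmono : Monotone F) (hst : s ≤ t) (hv : Measurable[F s] v) :
    Measurable[optFilt T F t] (embFrom T s v) := by
  refine measurable_optFilt_iff.mpr ⟨fun r hr => ?_, ?_, fun r hr ω => ?_⟩
  · by_cases h : s ≤ r
    · have h2 : (fun ω => embFrom T s v (ω, r)) = v := by funext ω i; simp [embFrom, h]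
      rw [h2]; exact hv.mono (hFmono h) le_rfl
    · have h2 : (fun ω => embFrom T s v (ω, r)) = fun _ _ => (0:ℝ) := by
        funext ω i; simp [embFrom, h]
      rw [h2]; exact measurable_const
  · have h2 : (fun ω => embFrom T s v (ω, t)) = v := by funext ω i; simp [embFrom, hst]
    rw [h2]; exact hv.mono (hFmono hst) le_rfl
  · funext i; simp [embFrom, hst, hst.trans hr]

lemma measurable_embAt_filt (hst : s < t) (hv : Measurable[F s] v) :
    Measurable[optFilt T F t] (embAt T s v) := by
  refine measurable_optFilt_iff.mpr ⟨fun r hr => ?_, ?_, fun r hr ω => ?_⟩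
  · by_cases h : r = s
    · have h2 : (fun ω => embAt T s v (ω, r)) = v := by funext ω i; simp [embAt, h]
      rw [h2]; exact h ▸ hv
    · have h2 : (fun ω => embAt T s v (ω, r)) = fun _ _ => (0:ℝ) := by
        funext ω i; simp [embAt, h]
      rw [h2]; exact measurable_const
  · have h2 : (fun ω => embAt T s v (ω, t)) = fun _ _ => (0:ℝ) := by
      funext ω i; simp [embAt, hst.ne']
    rw [h2]; exact measurable_const
  · funext i; simp [embAt, hst.ne', (hst.trans_le hr).ne']

lemma measurable_embAt_sigma (hv : Measurable[F s] v) :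
    Measurable[optSigma T F] (embAt T s v) := by
  refine measurable_optSigma_iff.mpr fun r => ?_
  by_cases h : r = s
  · have h2 : (fun ω => embAt T s v (ω, r)) = v := by funext ω i; simp [embAt, h]
    rw [h2]; exact h ▸ hv
  · have h2 : (fun ω => embAt T s v (ω, r)) = fun _ _ => (0:ℝ) := by
      funext ω i; simp [embAt, h]
    rw [h2]; exact measurable_const

lemma measurable_embProc {X : Fin (T+1) → Ω → Fin d → ℝ} (hX : ∀ r, Measurable[F r] (X r)) :
    Measurable[optSigma T F] (embProc T t X) := by
  refine measurable_optSigma_iff.mpr fun r => ?_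
  by_cases h : t ≤ r
  · have h2 : (fun ω => embProc T t X (ω, r)) = X r := by funext ω i; simp [embProc, h]
    rw [h2]; exact hX r
  · have h2 : (fun ω => embProc T t X (ω, r)) = fun _ _ => (0:ℝ) := by
      funext ω i; simp [embProc, h]
    rw [h2]; exact measurable_const

lemma measurable_evalAt_le (hrt : r ≤ t) (hu : Measurable[optFilt T F t] u) :
    Measurable[F r] (evalAt T r u) := by
  rcases lt_or_eq_of_le hrt with h | h
  · exact (measurable_optFilt_iff.mp hu).1 r h
  · subst h; exact (measurable_optFilt_iff.mp hu).2.1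

lemma evalAt_tail_eq (hu : Measurable[optFilt T F t] u) (hr : t ≤ r) (ω : Ω) :
    u (ω, r) = u (ω, t) := (measurable_optFilt_iff.mp hu).2.2 r hr ω

/-- Modification of `u0` on the time interval `[t, T]` by the vector `v`. -/
def modTail (T : ℕ) {d : ℕ} (t : Fin (T+1)) (u0 : Ω × Fin (T+1) → Fin d → ℝ)
    (v : Ω → Fin d → ℝ) : Ω × Fin (T+1) → Fin d → ℝ :=
  fun x i => if t ≤ x.2 then v x.1 i else u0 x i

/-- Modification of `u0` at time `s` by the vector `v`. -/
def modAt (T : ℕ) {d : ℕ} (s : Fin (T+1)) (u0 : Ω × Fin (T+1) → Fin d → ℝ)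
    (v : Ω → Fin d → ℝ) : Ω × Fin (T+1) → Fin d → ℝ :=
  fun x i => if x.2 = s then v x.1 i else u0 x i

lemma measurable_modTail {u0} (hu0 : Measurable[optFilt T F t] u0) (hv : Measurable[F t] v) :
    Measurable[optFilt T F t] (modTail T t u0 v) := by
  refine measurable_optFilt_iff.mpr ⟨fun r hr => ?_, ?_, fun r hr ω => ?_⟩
  · have h2 : (fun ω => modTail T t u0 v (ω, r)) = fun ω => u0 (ω, r) := by
      funext ω i; simp [modTail, not_le.mpr hr]
    rw [h2]; exact (measurable_optFilt_iff.mp hu0).1 r hr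
  · have h2 : (fun ω => modTail T t u0 v (ω, t)) = v := by funext ω i; simp [modTail]
    rw [h2]; exact hv
  · funext i; simp [modTail, hr]

lemma measurable_modAt {u0} (hst : s < t) (hu0 : Measurable[optFilt T F t] u0)
    (hv : Measurable[F s] v) : Measurable[optFilt T F t] (modAt T s u0 v) := by
  refine measurable_optFilt_iff.mpr ⟨fun r hr => ?_, ?_, fun r hr ω => ?_⟩
  · by_cases h : r = s
    · have h2 : (fun ω => modAt T s u0 v (ω, r)) = v := by funext ω i; simp [modAt, h]
      rw [h2]; exact h ▸ hv
    · have h2 : (fun ω => modAt T s u0 v (ω, r)) = fun ω => u0 (ω, r) := by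
        funext ω i; simp [modAt, h]
      rw [h2]; exact (measurable_optFilt_iff.mp hu0).1 r hr
  · have h2 : (fun ω => modAt T s u0 v (ω, t)) = fun ω => u0 (ω, t) := by
      funext ω i; simp [modAt, hst.ne']
    rw [h2]; exact (measurable_optFilt_iff.mp hu0).2.1
  · funext i
    simp only [modAt, (hst.trans_le hr).ne', if_false, hst.ne']
    rw [(measurable_optFilt_iff.mp hu0).2.2 r hr ω]

end Emb


section Mem
variable [m0 : MeasurableSpace Ω] {P : @Measure Ω m0} {μ : Fin (T+1) → Ω → ℝ}
  {F : Fin (T+1) → MeasurableSpace Ω} {t s r : Fin (T+1)} {d md : ℕ}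
  {u w : Ω × Fin (T+1) → Fin d → ℝ} {v : Ω → Fin d → ℝ}

lemma inM_zero : inM d md (fun _ => (0:ℝ)) := fun _ _ => rfl

lemma zero_mem_Linf {α : Type*} {m : MeasurableSpace α} : (0 : α → Fin d → ℝ) ∈ Linf m d :=
  ⟨measurable_zero, 0, fun ω i => by simp⟩

lemma zero_mem_MspP {α : Type*} {m0' : MeasurableSpace α} {m : MeasurableSpace α}
    {P' : @Measure α m0'} : (0 : α → Fin d → ℝ) ∈ MspP m P' d md :=
  ⟨⟨zero_mem_Linf, ae_of_all _ fun ω i _ => rfl⟩, ae_of_all _ fun ω i => le_refl 0⟩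

lemma Linf_mono {α : Type*} {m m' : MeasurableSpace α} (h : m ≤ m') :
    Linf m d ⊆ Linf m' d := fun _ hu => ⟨hu.1.mono h le_rfl, hu.2⟩

lemma aeOpt_inM (hFmono : Monotone F) (hFle : ∀ r', F r' ≤ m0)
    (hm : Measurable[optSigma T F] u)
    (h : ∀ r', ∀ᵐ ω ∂P, inM d md (u (ω, r'))) :
    ∀ᵐ x ∂(optMeas T F P μ), inM d md (u x) :=
  aeOpt hFle ((measurableSet_inM_pre hm).compl) h

lemma aeOpt_nonneg (hFle : ∀ r', F r' ≤ m0)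
    (hm : Measurable[optSigma T F] u)
    (h : ∀ r', ∀ᵐ ω ∂P, ∀ i, 0 ≤ u (ω, r') i) :
    ∀ᵐ x ∂(optMeas T F P μ), ∀ i, 0 ≤ u x i :=
  aeOpt hFle ((measurableSet_nonneg_pre hm).compl) h

lemma aeOpt_le (hFle : ∀ r', F r' ≤ m0)
    (hmu : Measurable[optSigma T F] u) (hmw : Measurable[optSigma T F] w)
    (h : ∀ r', ∀ᵐ ω ∂P, ∀ i, u (ω, r') i ≤ w (ω, r') i) :
    ∀ᵐ x ∂(optMeas T F P μ), ∀ i, u x i ≤ w x i := by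
  refine aeOpt hFle ?_ h
  have hset : {x | ¬ ∀ i, u x i ≤ w x i}
      = (⋂ i : Fin d, {x | u x i ≤ w x i})ᶜ := by
    ext x; simp [Set.mem_iInter]
  rw [hset]
  exact (MeasurableSet.iInter fun i => measurableSet_le
    ((measurable_pi_apply i).comp hmu) ((measurable_pi_apply i).comp hmw)).compl

lemma embTail_mem_Msp (hFmono : Monotone F) (hFle : ∀ r', F r' ≤ m0)
    (hv : v ∈ Msp (F t) P d md) :
    embTail T t v ∈ Msp (optFilt T F t) (optMeas T F P μ) d md := by
  obtain ⟨⟨hvm, C, hC⟩, hae⟩ := hv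
  have hm := measurable_embTail (T := T) (t := t) hvm
  refine ⟨⟨hm, max C 0, fun x i => ?_⟩, ?_⟩
  · by_cases h : t ≤ x.2
    · simp only [embTail, if_pos h]; exact (hC x.1 i).trans (le_max_left _ _)
    · simp only [embTail, if_neg h, abs_zero]; exact le_max_right _ _
  · refine aeOpt_inM hFmono hFle (hm.mono (optFilt_le_optSigma hFmono) le_rfl) fun r' => ?_
    by_cases h : t ≤ r'
    · filter_upwards [hae] with ω hω i hi
      simp only [embTail, if_pos h]; exact hω i hi
    · exact ae_of_all _ fun ω i hi => by simp [embTail, h]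

lemma embTail_mem_MspP (hFmono : Monotone F) (hFle : ∀ r', F r' ≤ m0)
    (hv : v ∈ MspP (F t) P d md) :
    embTail T t v ∈ MspP (optFilt T F t) (optMeas T F P μ) d md := by
  refine ⟨embTail_mem_Msp hFmono hFle hv.1, ?_⟩
  have hm := measurable_embTail (T := T) (t := t) hv.1.1.1
  refine aeOpt_nonneg hFle (hm.mono (optFilt_le_optSigma hFmono) le_rfl) fun r' => ?_
  by_cases h : t ≤ r'
  · filter_upwards [hv.2] with ω hω i
    simp only [embTail, if_pos h]; exact hω i
  · exact ae_of_all _ fun ω i => by simp [embTail, h]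

lemma embFrom_mem_MspP (hFmono : Monotone F) (hFle : ∀ r', F r' ≤ m0) (hst : s ≤ t)
    (hv : v ∈ MspP (F s) P d md) :
    embFrom T s v ∈ MspP (optFilt T F t) (optMeas T F P μ) d md := by
  obtain ⟨⟨⟨hvm, C, hC⟩, hae⟩, hpos'⟩ := hv
  have hm := measurable_embFrom (t := t) hFmono hst hvm
  have hms : Measurable[optSigma T F] (embFrom T s v) :=
    hm.mono (optFilt_le_optSigma hFmono) le_rfl
  refine ⟨⟨⟨hm, max C 0, fun x i => ?_⟩, ?_⟩, ?_⟩
  · by_cases h : s ≤ x.2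
    · simp only [embFrom, if_pos h]; exact (hC x.1 i).trans (le_max_left _ _)
    · simp only [embFrom, if_neg h, abs_zero]; exact le_max_right _ _
  · refine aeOpt_inM hFmono hFle hms fun r' => ?_
    by_cases h : s ≤ r'
    · filter_upwards [hae] with ω hω i hi
      simp only [embFrom, if_pos h]; exact hω i hi
    · exact ae_of_all _ fun ω i hi => by simp [embFrom, h]
  · refine aeOpt_nonneg hFle hms fun r' => ?_
    by_cases h : s ≤ r'
    · filter_upwards [hpos'] with ω hω i
      simp only [embFrom, if_pos h]; exact hω i
    · exact ae_of_all _ fun ω i => by simp [embFrom, h]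

lemma embAt_mem_Msp (hFmono : Monotone F) (hFle : ∀ r', F r' ≤ m0) (hst : s < t)
    (hv : v ∈ Msp (F s) P d md) :
    embAt T s v ∈ Msp (optFilt T F t) (optMeas T F P μ) d md := by
  obtain ⟨⟨hvm, C, hC⟩, hae⟩ := hv
  have hm := measurable_embAt_filt (t := t) hst hvm
  refine ⟨⟨hm, max C 0, fun x i => ?_⟩, ?_⟩
  · by_cases h : x.2 = s
    · simp only [embAt, if_pos h]; exact (hC x.1 i).trans (le_max_left _ _)
    · simp only [embAt, if_neg h, abs_zero]; exact le_max_right _ _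
  · refine aeOpt_inM hFmono hFle (hm.mono (optFilt_le_optSigma hFmono) le_rfl) fun r' => ?_
    by_cases h : r' = s
    · filter_upwards [hae] with ω hω i hi
      simp only [embAt, if_pos h]; exact hω i hi
    · exact ae_of_all _ fun ω i hi => by simp [embAt, h]

lemma evalAt_mem_Msp (hFle : ∀ r', F r' ≤ m0) (hmr : ∀ r', @Measurable Ω ℝ m0 _ (μ r'))
    (hpos : ∀ r', ∀ᵐ ω ∂P, 0 < μ r' ω) (hrt : r ≤ t)
    (hu : u ∈ Msp (optFilt T F t) (optMeas T F P μ) d md) :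
    evalAt T r u ∈ Msp (F r) P d md := by
  obtain ⟨⟨hum, C, hC⟩, hae⟩ := hu
  exact ⟨⟨measurable_evalAt_le hrt hum, C, fun ω i => hC (ω, r) i⟩,
    aeP_of_aeOpt hFle hmr hpos hae r⟩

lemma embProc_mem_Linf {X : Fin (T+1) → Ω → Fin d → ℝ} (hX : X ∈ procSp T F d t) :
    embProc T t X ∈ Linf (optSigma T F) d := by
  obtain ⟨hXm, ⟨C, hC⟩, hX0⟩ := hX
  refine ⟨measurable_embProc hXm, max C 0, fun x i => ?_⟩
  by_cases h : t ≤ x.2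
  · simp only [embProc, if_pos h]; exact (hC x.2 x.1 i).trans (le_max_left _ _)
  · simp only [embProc, if_neg h, abs_zero]; exact le_max_right _ _

lemma embAt_mem_Linf {Z : Ω → Fin d → ℝ} (hZ : Z ∈ Linf (F s) d) :
    embAt T s Z ∈ Linf (optSigma T F) d := by
  obtain ⟨hZm, C, hC⟩ := hZ
  refine ⟨measurable_embAt_sigma hZm, max C 0, fun x i => ?_⟩
  by_cases h : x.2 = s
  · simp only [embAt, if_pos h]; exact (hC x.1 i).trans (le_max_left _ _)
  · simp only [embAt, if_neg h, abs_zero]; exact le_max_right _ _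

lemma image_add_of_add {β γ : Type*} [Add β] [Add γ] {g : β → γ}
    (hg : ∀ a b, g (a + b) = g a + g b) (S S' : Set β) :
    g '' (S + S') = g '' S + g '' S' := by
  ext y
  constructor
  · rintro ⟨x, hx, rfl⟩
    obtain ⟨a, ha, b, hb, rfl⟩ := Set.mem_add.mp hx
    exact Set.mem_add.mpr ⟨g a, Set.mem_image_of_mem _ ha, g b,
      Set.mem_image_of_mem _ hb, (hg a b).symm⟩
  · intro hy
    obtain ⟨a', ⟨a, ha, rfl⟩, b', ⟨b, hb, rfl⟩, rfl⟩ := Set.mem_add.mp hy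
    exact ⟨a + b, Set.add_mem_add ha hb, hg a b⟩

end Mem

section Graph
variable [m0 : MeasurableSpace Ω] {P : @Measure Ω m0} {μ : Fin (T+1) → Ω → ℝ}
  {F : Fin (T+1) → MeasurableSpace Ω} {t s r : Fin (T+1)} {d md : ℕ}

lemma measurable_mkPair_filt (hrt : r ≤ t) :
    @Measurable Ω (Ω × Fin (T+1)) (F r) (optFilt T F t) (fun ω => (ω, r)) := by
  intro S hS
  obtain ⟨h1, h2, h3⟩ := measurableSet_optFilt_iff.mp hS
  rcases lt_or_eq_of_le hrt with h | h
  · exact h1 r h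
  · subst h; exact h2

lemma prod_optFilt_tail_const {β : Type*} [mβ : MeasurableSpace β]
    {G : Set ((Ω × Fin (T+1)) × β)}
    (hG : MeasurableSet[(optFilt T F t).prod mβ] G) (hr : t ≤ r) (ω : Ω) (y : β) :
    (((ω, r), y) ∈ G ↔ ((ω, t), y) ∈ G) := by
  let C : MeasurableSpace ((Ω × Fin (T+1)) × β) :=
    { MeasurableSet' := fun S => ∀ r', t ≤ r' → ∀ ω y, (((ω, r'), y) ∈ S ↔ ((ω, t), y) ∈ S)
      measurableSet_empty := fun _ _ _ _ => Iff.rfl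
      measurableSet_compl := fun S hS r' hr' ω y => not_congr (hS r' hr' ω y)
      measurableSet_iUnion := fun f hf r' hr' ω y => by
        simp only [Set.mem_iUnion]
        exact exists_congr fun n => hf n r' hr' ω y }
  have hfst : @Measurable _ _ C (optFilt T F t) Prod.fst := by
    intro S hS r' hr' ω y
    show (ω, r') ∈ S ↔ (ω, t) ∈ S
    have h3 := (measurableSet_optFilt_iff.mp hS).2.2 r' hr'
    constructor
    · intro h
      have hh : ω ∈ (fun ω => (ω, r')) ⁻¹' S := h
      rw [h3] at hh; exact hh
    · intro h
      have hh : ω ∈ (fun ω => (ω, t)) ⁻¹' S := h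
      rw [← h3] at hh; exact hh
  have hsnd : @Measurable _ _ C mβ Prod.snd := fun S _ r' hr' ω y => Iff.rfl
  have hle : (optFilt T F t).prod mβ ≤ C :=
    sup_le hfst.comap_le hsnd.comap_le
  exact hle _ hG r hr ω y

lemma prod_optFilt_section {β : Type*} [mβ : MeasurableSpace β] (hrt : r ≤ t)
    {G : Set ((Ω × Fin (T+1)) × β)} (hG : MeasurableSet[(optFilt T F t).prod mβ] G) :
    MeasurableSet[(F r).prod mβ] {p : Ω × β | ((p.1, r), p.2) ∈ G} := by
  letI : MeasurableSpace (Ω × Fin (T+1)) := optFilt T F t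
  letI : MeasurableSpace Ω := F r
  exact (Measurable.prodMk ((measurable_mkPair_filt hrt).comp measurable_fst)
    measurable_snd) hG

/-- The graph-membership set of a measurable random set, composed with a measurable
function, is measurable. -/
lemma measurableSet_mem_graph {u : Ω × Fin (T+1) → Fin d → ℝ} {R0 : Ω × Fin (T+1) → Set (Fin d → ℝ)}
    (hFmono : Monotone F)
    (hG : MeasurableSet[(optFilt T F t).prod inferInstance]
      {p : (Ω × Fin (T+1)) × (Fin d → ℝ) | p.2 ∈ R0 p.1})
    (hu : Measurable[optSigma T F] u) :
    MeasurableSet[optSigma T F] {x | u x ∈ R0 x} := by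
  letI : MeasurableSpace (Ω × Fin (T+1)) := optSigma T F
  have hid : @Measurable (Ω × Fin (T+1)) (Ω × Fin (T+1)) (optSigma T F) (optFilt T F t) id :=
    fun S hS => optFilt_le_optSigma hFmono _ hS
  have hpair : @Measurable (Ω × Fin (T+1)) ((Ω × Fin (T+1)) × (Fin d → ℝ))
      (optSigma T F) ((optFilt T F t).prod inferInstance) (fun x => (x, u x)) := by
    letI m2 : MeasurableSpace (Ω × Fin (T+1)) := optFilt T F t
    exact Measurable.prodMk hid hu
  exact hpair hG

end Graph

section Repr
variable [m0 : MeasurableSpace Ω] {P : @Measure Ω m0} {μ : Fin (T+1) → Ω → ℝ}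
  {F : Fin (T+1) → MeasurableSpace Ω} {t s r : Fin (T+1)} {d md : ℕ}
  {S : Set ((Ω × Fin (T+1)) → Fin d → ℝ)} {R0 : Ω × Fin (T+1) → Set (Fin d → ℝ)}
  {u0 : Ω × Fin (T+1) → Fin d → ℝ} {v : Ω → Fin d → ℝ}

lemma modTail_mem_repr (hFmono : Monotone F) (hFle : ∀ r', F r' ≤ m0)
    (hmr : ∀ r', @Measurable Ω ℝ m0 _ (μ r')) (hpos : ∀ r', ∀ᵐ ω ∂P, 0 < μ r' ω)
    (hG : MeasurableSet[(optFilt T F t).prod inferInstance]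
      {p : (Ω × Fin (T+1)) × (Fin d → ℝ) | p.2 ∈ R0 p.1})
    (hSeq : S = {u | u ∈ Linf (optFilt T F t) d ∧ ∀ᵐ x ∂(optMeas T F P μ), u x ∈ R0 x})
    (hu0 : u0 ∈ S) (hvL : v ∈ Linf (F t) d) (hvae : ∀ᵐ ω ∂P, v ω ∈ R0 (ω, t)) :
    modTail T t u0 v ∈ S := by
  rw [hSeq] at hu0 ⊢
  obtain ⟨⟨hu0m, C0, hC0⟩, hu0ae⟩ := hu0
  obtain ⟨hvm, Cv, hCv⟩ := hvL
  have hm : Measurable[optFilt T F t] (modTail T t u0 v) := measurable_modTail hu0m hvm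
  have hms : Measurable[optSigma T F] (modTail T t u0 v) :=
    hm.mono (optFilt_le_optSigma hFmono) le_rfl
  refine ⟨⟨hm, max C0 Cv, fun x i => ?_⟩, ?_⟩
  · by_cases h : t ≤ x.2
    · simp only [modTail, if_pos h]; exact (hCv x.1 i).trans (le_max_right _ _)
    · simp only [modTail, if_neg h]; exact (hC0 x i).trans (le_max_left _ _)
  · refine aeOpt hFle (measurableSet_mem_graph hFmono hG hms).compl fun r' => ?_
    by_cases h : t ≤ r'
    · filter_upwards [hvae] with ω hω
      show modTail T t u0 v (ω, r') ∈ R0 (ω, r')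
      have he : modTail T t u0 v (ω, r') = v ω := by funext i; simp [modTail, h]
      rw [he]
      exact (prod_optFilt_tail_const hG h ω (v ω)).mpr hω
    · filter_upwards [aeP_of_aeOpt hFle hmr hpos hu0ae r'] with ω hω
      show modTail T t u0 v (ω, r') ∈ R0 (ω, r')
      have he : modTail T t u0 v (ω, r') = u0 (ω, r') := by funext i; simp [modTail, h]
      rw [he]; exact hω

lemma modAt_mem_repr (hFmono : Monotone F) (hFle : ∀ r', F r' ≤ m0)
    (hmr : ∀ r', @Measurable Ω ℝ m0 _ (μ r')) (hpos : ∀ r', ∀ᵐ ω ∂P, 0 < μ r' ω)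
    (hst : s < t)
    (hG : MeasurableSet[(optFilt T F t).prod inferInstance]
      {p : (Ω × Fin (T+1)) × (Fin d → ℝ) | p.2 ∈ R0 p.1})
    (hSeq : S = {u | u ∈ Linf (optFilt T F t) d ∧ ∀ᵐ x ∂(optMeas T F P μ), u x ∈ R0 x})
    (hu0 : u0 ∈ S) (hvL : v ∈ Linf (F s) d) (hvae : ∀ᵐ ω ∂P, v ω ∈ R0 (ω, s)) :
    modAt T s u0 v ∈ S := by
  rw [hSeq] at hu0 ⊢
  obtain ⟨⟨hu0m, C0, hC0⟩, hu0ae⟩ := hu0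
  obtain ⟨hvm, Cv, hCv⟩ := hvL
  have hm : Measurable[optFilt T F t] (modAt T s u0 v) := measurable_modAt hst hu0m hvm
  have hms : Measurable[optSigma T F] (modAt T s u0 v) :=
    hm.mono (optFilt_le_optSigma hFmono) le_rfl
  refine ⟨⟨hm, max C0 Cv, fun x i => ?_⟩, ?_⟩
  · by_cases h : x.2 = s
    · simp only [modAt, if_pos h]; exact (hCv x.1 i).trans (le_max_right _ _)
    · simp only [modAt, if_neg h]; exact (hC0 x i).trans (le_max_left _ _)
  · refine aeOpt hFle (measurableSet_mem_graph hFmono hG hms).compl fun r' => ?_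
    by_cases h : r' = s
    · subst h
      filter_upwards [hvae] with ω hω
      show modAt T r' u0 v (ω, r') ∈ R0 (ω, r')
      have he : modAt T r' u0 v (ω, r') = v ω := by funext i; simp [modAt]
      rw [he]; exact hω
    · filter_upwards [aeP_of_aeOpt hFle hmr hpos hu0ae r'] with ω hω
      show modAt T s u0 v (ω, r') ∈ R0 (ω, r')
      have he : modAt T s u0 v (ω, r') = u0 (ω, r') := by funext i; simp [modAt, h]
      rw [he]; exact hω

lemma image_repr_tail (hFmono : Monotone F) (hFle : ∀ r', F r' ≤ m0)
    (hmr : ∀ r', @Measurable Ω ℝ m0 _ (μ r')) (hpos : ∀ r', ∀ᵐ ω ∂P, 0 < μ r' ω)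
    (hG : MeasurableSet[(optFilt T F t).prod inferInstance]
      {p : (Ω × Fin (T+1)) × (Fin d → ℝ) | p.2 ∈ R0 p.1})
    (hSeq : S = {u | u ∈ Linf (optFilt T F t) d ∧ ∀ᵐ x ∂(optMeas T F P μ), u x ∈ R0 x})
    (hne : S.Nonempty) :
    evalAt T t '' S = {v | v ∈ Linf (F t) d ∧ ∀ᵐ ω ∂P, v ω ∈ R0 (ω, t)} := by
  apply Set.Subset.antisymm
  · rintro _ ⟨u, hu, rfl⟩
    rw [hSeq] at hu
    obtain ⟨⟨hum, C, hC⟩, huae⟩ := hu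
    exact ⟨⟨measurable_evalAt_le le_rfl hum, C, fun ω i => hC (ω, t) i⟩,
      aeP_of_aeOpt hFle hmr hpos huae t⟩
  · rintro v ⟨hvL, hvae⟩
    obtain ⟨u0, hu0⟩ := id hne
    refine ⟨modTail T t u0 v,
      modTail_mem_repr hFmono hFle hmr hpos hG hSeq hu0 hvL hvae, ?_⟩
    funext ω i; simp [evalAt, modTail]

lemma image_repr_at (hFmono : Monotone F) (hFle : ∀ r', F r' ≤ m0)
    (hmr : ∀ r', @Measurable Ω ℝ m0 _ (μ r')) (hpos : ∀ r', ∀ᵐ ω ∂P, 0 < μ r' ω)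
    (hst : s < t)
    (hG : MeasurableSet[(optFilt T F t).prod inferInstance]
      {p : (Ω × Fin (T+1)) × (Fin d → ℝ) | p.2 ∈ R0 p.1})
    (hSeq : S = {u | u ∈ Linf (optFilt T F t) d ∧ ∀ᵐ x ∂(optMeas T F P μ), u x ∈ R0 x})
    (hne : S.Nonempty) :
    evalAt T s '' S = {v | v ∈ Linf (F s) d ∧ ∀ᵐ ω ∂P, v ω ∈ R0 (ω, s)} := by
  apply Set.Subset.antisymm
  · rintro _ ⟨u, hu, rfl⟩
    rw [hSeq] at hu
    obtain ⟨⟨hum, C, hC⟩, huae⟩ := hu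
    exact ⟨⟨measurable_evalAt_le hst.le hum, C, fun ω i => hC (ω, s) i⟩,
      aeP_of_aeOpt hFle hmr hpos huae s⟩
  · rintro v ⟨hvL, hvae⟩
    obtain ⟨u0, hu0⟩ := id hne
    refine ⟨modAt T s u0 v,
      modAt_mem_repr hFmono hFle hmr hpos hst hG hSeq hu0 hvL hvae, ?_⟩
    funext ω i; simp [evalAt, modAt]

lemma P_slice_null (hFle : ∀ r', F r' ≤ m0) (hmr : ∀ r', @Measurable Ω ℝ m0 _ (μ r'))
    (hpos : ∀ r', ∀ᵐ ω ∂P, 0 < μ r' ω) {N : Set (Ω × Fin (T+1))}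
    (h : optMeas T F P μ N = 0) (r : Fin (T+1)) : P {ω | (ω, r) ∈ N} = 0 :=
  measure_eq_zero_iff_ae_notMem.mpr
    (aeP_of_aeOpt hFle hmr hpos (measure_eq_zero_iff_ae_notMem.mp h) r)

lemma decomp_repr {m : MeasurableSpace Ω} {R0' : Ω → Set (Fin d → ℝ)} :
    Decomp m {v : Ω → Fin d → ℝ | v ∈ Linf m d ∧ ∀ᵐ ω ∂P, v ω ∈ R0' ω} := by
  intro A hA u hu v hv
  obtain ⟨⟨hum, Cu, hCu⟩, huae⟩ := hu
  obtain ⟨⟨hvm, Cv, hCv⟩, hvae⟩ := hv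
  refine ⟨⟨(hum.indicator hA).add (hvm.indicator hA.compl), max Cu Cv, fun ω i => ?_⟩, ?_⟩
  · by_cases h : ω ∈ A
    · have he : (A.indicator u + Aᶜ.indicator v) ω = u ω := by
        simp [Set.indicator_apply, h]
      rw [he]; exact (hCu ω i).trans (le_max_left _ _)
    · have he : (A.indicator u + Aᶜ.indicator v) ω = v ω := by
        simp [Set.indicator_apply, h]
      rw [he]; exact (hCv ω i).trans (le_max_right _ _)
  · filter_upwards [huae, hvae] with ω h1 h2
    by_cases h : ω ∈ A
    · have he : (A.indicator u + Aᶜ.indicator v) ω = u ω := by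
        simp [Set.indicator_apply, h]
      rw [he]; exact h1
    · have he : (A.indicator u + Aᶜ.indicator v) ω = v ω := by
        simp [Set.indicator_apply, h]
      rw [he]; exact h2

end Repr

section Closed
variable [m0 : MeasurableSpace Ω] {P : @Measure Ω m0} {μ : Fin (T+1) → Ω → ℝ}
  {F : Fin (T+1) → MeasurableSpace Ω} {t s : Fin (T+1)} {d md : ℕ}

lemma Iio_union_Ici_fin (t : Fin (T+1)) : Finset.Iio t ∪ Finset.Ici t = Finset.univ := by
  ext r
  simp only [Finset.mem_union, Finset.mem_Iio, Finset.mem_Ici, Finset.mem_univ, iff_true]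
  exact lt_or_ge r t

lemma disj_Iio_Ici (t : Fin (T+1)) : Disjoint (Finset.Iio t) (Finset.Ici t) := by
  rw [Finset.disjoint_left]
  intro r h1 h2
  exact absurd (Finset.mem_Ici.mp h2) (not_le.mpr (Finset.mem_Iio.mp h1))

lemma sum_split {M : Type*} [AddCommMonoid M] (f : Fin (T+1) → M) (t : Fin (T+1)) :
    ∑ r, f r = (∑ r ∈ Finset.Iio t, f r) + ∑ r ∈ Finset.Ici t, f r := by
  rw [← Finset.sum_union (disj_Iio_Ici t), Iio_union_Ici_fin]

lemma integrable_pairing (hFmono : Monotone F) (hFle : ∀ r', F r' ≤ m0)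
    (Y : ↥(L1t (optFilt T F t) (optMeas T F P μ) d)) {g : Ω × Fin (T+1) → Fin d → ℝ}
    (hgm : Measurable[optSigma T F] g) {C : ℝ} (hC : ∀ x i, |g x i| ≤ C) :
    Integrable (fun x => ∑ i, Y.1 x i * g x i) (optMeas T F P μ) := by
  letI : MeasurableSpace (Ω × Fin (T+1)) := optSigma T F
  have hYm : Measurable[optSigma T F] Y.1 := Y.2.1.mono (optFilt_le_optSigma hFmono) le_rfl
  have hmeas : Measurable[optSigma T F] fun x => ∑ i, Y.1 x i * g x i :=
    Finset.measurable_sum _ fun i _ =>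
      ((measurable_pi_apply i).comp hYm).mul ((measurable_pi_apply i).comp hgm)
  refine Integrable.mono' (g := fun x => ∑ i, |Y.1 x i| * C)
    (integrable_finset_sum _ fun i _ => (Y.2.2 i).abs.mul_const C)
    hmeas.aestronglyMeasurable (ae_of_all _ fun x => ?_)
  refine (norm_sum_le _ _).trans (Finset.sum_le_sum fun i _ => ?_)
  rw [norm_mul]
  exact mul_le_mul_of_nonneg_left ((Real.norm_eq_abs _) ▸ hC x i) (norm_nonneg _)

lemma yProj_tail_mem (hFmono : Monotone F) (hFle : ∀ r', F r' ≤ m0)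
    (hμa : ∀ r', Measurable[F r'] (μ r')) (hpos : ∀ r', ∀ᵐ ω ∂P, 0 < μ r' ω)
    (hμs : ∀ᵐ ω ∂P, ∑ r, μ r ω = 1)
    (Y : ↥(L1t (optFilt T F t) (optMeas T F P μ) d)) :
    (fun ω i => (1 - ∑ r ∈ Finset.Iio t, μ r ω) * Y.1 (ω, t) i) ∈ L1t (F t) P d := by
  have hmr : ∀ r', @Measurable Ω ℝ m0 _ (μ r') := fun r' => (hμa r').mono (hFle r') le_rfl
  obtain ⟨hYm, hYi⟩ := Y.2
  have hsm : Measurable[F t] fun ω => (1 : ℝ) - ∑ r ∈ Finset.Iio t, μ r ω :=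
    measurable_const.sub (Finset.measurable_sum _ fun r hr =>
      (hμa r).mono (hFmono (Finset.mem_Iio.mp hr).le) le_rfl)
  constructor
  · have : Measurable[F t] fun ω (i : Fin d) =>
        (1 - ∑ r ∈ Finset.Iio t, μ r ω) * Y.1 (ω, t) i := by
      letI : MeasurableSpace Ω := F t
      exact measurable_pi_lambda _ fun i =>
        hsm.mul ((measurable_pi_apply i).comp (measurable_evalAt_le (F := F) le_rfl hYm))
    exact this
  · intro i
    have hterm : ∀ r ∈ Finset.Ici t, Integrable (fun ω => max (μ r ω) 0 * Y.1 (ω, r) i) P :=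
      fun r _ => integrable_slice hFle hmr (hYi i) r
    have hsum : Integrable (fun ω => ∑ r ∈ Finset.Ici t, max (μ r ω) 0 * Y.1 (ω, r) i) P :=
      integrable_finset_sum _ hterm
    refine hsum.congr ?_
    have hallpos : ∀ᵐ ω ∂P, ∀ r, 0 < μ r ω := (ae_all_iff).mpr hpos
    filter_upwards [hμs, hallpos] with ω h1 h2
    have htail : ∀ r, t ≤ r → Y.1 (ω, r) = Y.1 (ω, t) := fun r hr => evalAt_tail_eq hYm hr ω
    have e1 : ∀ r ∈ Finset.Ici t, max (μ r ω) 0 * Y.1 (ω, r) i = μ r ω * Y.1 (ω, t) i := by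
      intro r hr
      rw [max_eq_left (h2 r).le, htail r (Finset.mem_Ici.mp hr)]
    rw [Finset.sum_congr rfl e1, ← Finset.sum_mul]
    have e2 : ∑ r ∈ Finset.Ici t, μ r ω = 1 - ∑ r ∈ Finset.Iio t, μ r ω := by
      have := sum_split (fun r => μ r ω) t
      rw [h1] at this
      linarith
    rw [e2]

lemma pairing_eq_tail (hFmono : Monotone F) (hFle : ∀ r', F r' ≤ m0)
    (hμa : ∀ r', Measurable[F r'] (μ r')) (hpos : ∀ r', ∀ᵐ ω ∂P, 0 < μ r' ω)
    (hμs : ∀ᵐ ω ∂P, ∑ r, μ r ω = 1)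
    (Y : ↥(L1t (optFilt T F t) (optMeas T F P μ) d))
    {u0 : Ω × Fin (T+1) → Fin d → ℝ} {w : Ω → Fin d → ℝ}
    (hu0L : u0 ∈ Linf (optFilt T F t) d) (hwL : w ∈ Linf (F t) d) :
    ∫ x, ∑ i, Y.1 x i * modTail T t u0 w x i ∂(optMeas T F P μ)
      = (∫ ω, ∑ i, ((1 - ∑ r ∈ Finset.Iio t, μ r ω) * Y.1 (ω, t) i) * w ω i ∂P)
        + ∑ r ∈ Finset.Iio t, ∫ ω, max (μ r ω) 0 * (∑ i, Y.1 (ω, r) i * u0 (ω, r) i) ∂P := by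
  have hmr : ∀ r', @Measurable Ω ℝ m0 _ (μ r') := fun r' => (hμa r').mono (hFle r') le_rfl
  obtain ⟨hu0m, C0, hC0⟩ := hu0L
  obtain ⟨hwm, Cw, hCw⟩ := hwL
  have hYm : Measurable[optFilt T F t] Y.1 := Y.2.1
  have hmm : Measurable[optFilt T F t] (modTail T t u0 w) := measurable_modTail hu0m hwm
  have hmms : Measurable[optSigma T F] (modTail T t u0 w) :=
    hmm.mono (optFilt_le_optSigma hFmono) le_rfl
  have hbound : ∀ x i, |modTail T t u0 w x i| ≤ max C0 Cw := by
    intro x i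
    by_cases h : t ≤ x.2
    · simp only [modTail, if_pos h]; exact (hCw x.1 i).trans (le_max_right _ _)
    · simp only [modTail, if_neg h]; exact (hC0 x i).trans (le_max_left _ _)
  have hint : Integrable (fun x => ∑ i, Y.1 x i * modTail T t u0 w x i) (optMeas T F P μ) :=
    integrable_pairing hFmono hFle Y hmms hbound
  rw [integral_opt hFle hmr hint, sum_split _ t]
  have hpre : (∑ r ∈ Finset.Iio t, ∫ ω, max (μ r ω) 0
        * ∑ i, Y.1 (ω, r) i * modTail T t u0 w (ω, r) i ∂P)
      = ∑ r ∈ Finset.Iio t, ∫ ω, max (μ r ω) 0 * (∑ i, Y.1 (ω, r) i * u0 (ω, r) i) ∂P := by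
    refine Finset.sum_congr rfl fun r hr => ?_
    have hrt : r < t := Finset.mem_Iio.mp hr
    have he : (fun ω => max (μ r ω) 0 * ∑ i, Y.1 (ω, r) i * modTail T t u0 w (ω, r) i)
        = fun ω => max (μ r ω) 0 * (∑ i, Y.1 (ω, r) i * u0 (ω, r) i) := by
      funext ω
      congr 1
      refine Finset.sum_congr rfl fun i _ => ?_
      congr 1
      simp [modTail, not_le.mpr hrt]
    rw [he]
  have e1 : ∀ r ∈ Finset.Ici t, (fun ω => max (μ r ω) 0
        * ∑ i, Y.1 (ω, r) i * modTail T t u0 w (ω, r) i)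
      = fun ω => max (μ r ω) 0 * ∑ i, Y.1 (ω, t) i * w ω i := by
    intro r hr
    have hrt : t ≤ r := Finset.mem_Ici.mp hr
    funext ω
    congr 1
    refine Finset.sum_congr rfl fun i _ => ?_
    rw [evalAt_tail_eq hYm hrt ω]
    congr 1
    simp [modTail, hrt]
  have hterm' : ∀ r ∈ Finset.Ici t,
      Integrable (fun ω => max (μ r ω) 0 * ∑ i, Y.1 (ω, t) i * w ω i) P := by
    intro r hr
    have := integrable_slice hFle hmr hint r
    rw [e1 r hr] at this
    exact this
  have htail : (∑ r ∈ Finset.Ici t, ∫ ω, max (μ r ω) 0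
        * ∑ i, Y.1 (ω, r) i * modTail T t u0 w (ω, r) i ∂P)
      = ∫ ω, ∑ i, ((1 - ∑ r ∈ Finset.Iio t, μ r ω) * Y.1 (ω, t) i) * w ω i ∂P := by
    have hsc : ∀ r ∈ Finset.Ici t,
        (∫ ω, max (μ r ω) 0 * ∑ i, Y.1 (ω, r) i * modTail T t u0 w (ω, r) i ∂P)
          = ∫ ω, max (μ r ω) 0 * ∑ i, Y.1 (ω, t) i * w ω i ∂P := fun r hr => by
      rw [e1 r hr]
    rw [Finset.sum_congr rfl hsc, ← integral_finset_sum _ hterm']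
    have hallpos : ∀ᵐ ω ∂P, ∀ r, 0 < μ r ω := (ae_all_iff).mpr hpos
    refine integral_congr_ae ?_
    filter_upwards [hμs, hallpos] with ω h1 h2
    have e2 : ∑ r ∈ Finset.Ici t, max (μ r ω) 0 * ∑ i, Y.1 (ω, t) i * w ω i
        = (∑ r ∈ Finset.Ici t, μ r ω) * ∑ i, Y.1 (ω, t) i * w ω i := by
      rw [Finset.sum_mul]
      exact Finset.sum_congr rfl fun r _ => by rw [max_eq_left (h2 r).le]
    have e3 : ∑ r ∈ Finset.Ici t, μ r ω = 1 - ∑ r ∈ Finset.Iio t, μ r ω := by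
      have h4 := sum_split (fun r => μ r ω) t
      rw [h1] at h4
      linarith
    rw [e2, e3, Finset.mul_sum]
    exact Finset.sum_congr rfl fun i _ => (mul_assoc _ _ _).symm
  rw [hpre, htail, add_comm]


lemma yProj_at_mem (hFle : ∀ r', F r' ≤ m0)
    (hμa : ∀ r', Measurable[F r'] (μ r'))
    (Y : ↥(L1t (optFilt T F t) (optMeas T F P μ) d)) (hst : s ≤ t) :
    (fun ω i => max (μ s ω) 0 * Y.1 (ω, s) i) ∈ L1t (F s) P d := by
  have hmr : ∀ r', @Measurable Ω ℝ m0 _ (μ r') := fun r' => (hμa r').mono (hFle r') le_rfl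
  obtain ⟨hYm, hYi⟩ := Y.2
  constructor
  · have : Measurable[F s] fun ω (i : Fin d) => max (μ s ω) 0 * Y.1 (ω, s) i := by
      letI : MeasurableSpace Ω := F s
      exact measurable_pi_lambda _ fun i =>
        ((hμa s).max measurable_const).mul
          ((measurable_pi_apply i).comp (measurable_evalAt_le (F := F) hst hYm))
    exact this
  · intro i
    exact integrable_slice hFle hmr (hYi i) s

lemma measurable_modAt_sigma (hFmono : Monotone F)
    {u0 : Ω × Fin (T+1) → Fin d → ℝ} {w : Ω → Fin d → ℝ}
    (hu0m : Measurable[optFilt T F t] u0) (hwm : Measurable[F s] w) :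
    Measurable[optSigma T F] (modAt T s u0 w) := by
  refine measurable_optSigma_iff.mpr fun r => ?_
  by_cases h : r = s
  · have he : (fun ω => modAt T s u0 w (ω, r)) = w := by
      funext ω i; simp [modAt, h]
    rw [he]; exact h ▸ hwm
  · have he : (fun ω => modAt T s u0 w (ω, r)) = fun ω => u0 (ω, r) := by
      funext ω i; simp [modAt, h]
    rw [he]
    exact measurable_optSigma_iff.mp (hu0m.mono (optFilt_le_optSigma hFmono) le_rfl) r

lemma pairing_eq_at (hFmono : Monotone F) (hFle : ∀ r', F r' ≤ m0)
    (hμa : ∀ r', Measurable[F r'] (μ r'))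
    (Y : ↥(L1t (optFilt T F t) (optMeas T F P μ) d))
    {u0 : Ω × Fin (T+1) → Fin d → ℝ} {w : Ω → Fin d → ℝ}
    (hu0L : u0 ∈ Linf (optFilt T F t) d) (hwL : w ∈ Linf (F s) d) :
    ∫ x, ∑ i, Y.1 x i * modAt T s u0 w x i ∂(optMeas T F P μ)
      = (∫ ω, ∑ i, (max (μ s ω) 0 * Y.1 (ω, s) i) * w ω i ∂P)
        + ∑ r ∈ Finset.univ.erase s,
            ∫ ω, max (μ r ω) 0 * (∑ i, Y.1 (ω, r) i * u0 (ω, r) i) ∂P := by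
  have hmr : ∀ r', @Measurable Ω ℝ m0 _ (μ r') := fun r' => (hμa r').mono (hFle r') le_rfl
  obtain ⟨hu0m, C0, hC0⟩ := hu0L
  obtain ⟨hwm, Cw, hCw⟩ := hwL
  have hmms : Measurable[optSigma T F] (modAt T s u0 w) :=
    measurable_modAt_sigma hFmono hu0m hwm
  have hbound : ∀ x i, |modAt T s u0 w x i| ≤ max C0 Cw := by
    intro x i
    by_cases h : x.2 = s
    · simp only [modAt, if_pos h]; exact (hCw x.1 i).trans (le_max_right _ _)
    · simp only [modAt, if_neg h]; exact (hC0 x i).trans (le_max_left _ _)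
  have hint : Integrable (fun x => ∑ i, Y.1 x i * modAt T s u0 w x i) (optMeas T F P μ) :=
    integrable_pairing hFmono hFle Y hmms hbound
  rw [integral_opt hFle hmr hint,
    ← Finset.add_sum_erase _ _ (Finset.mem_univ s)]
  congr 1
  · have he : (fun ω => max (μ s ω) 0 * ∑ i, Y.1 (ω, s) i * modAt T s u0 w (ω, s) i)
        = fun ω => ∑ i, (max (μ s ω) 0 * Y.1 (ω, s) i) * w ω i := by
      funext ω
      rw [Finset.mul_sum]
      refine Finset.sum_congr rfl fun i _ => ?_
      rw [← mul_assoc]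
      congr 1
      simp [modAt]
    rw [he]
  · refine Finset.sum_congr rfl fun r hr => ?_
    have hrs : r ≠ s := (Finset.mem_erase.mp hr).1
    have he : (fun ω => max (μ r ω) 0 * ∑ i, Y.1 (ω, r) i * modAt T s u0 w (ω, r) i)
        = fun ω => max (μ r ω) 0 * (∑ i, Y.1 (ω, r) i * u0 (ω, r) i) := by
      funext ω
      congr 1
      refine Finset.sum_congr rfl fun i _ => ?_
      congr 1
      simp [modAt, hrs]
    rw [he]

lemma closed_transfer_tail (hFmono : Monotone F) (hFle : ∀ r', F r' ≤ m0)
    (hμa : ∀ r', Measurable[F r'] (μ r')) (hpos : ∀ r', ∀ᵐ ω ∂P, 0 < μ r' ω)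
    (hμs : ∀ᵐ ω ∂P, ∑ r, μ r ω = 1)
    {S : Set ((Ω × Fin (T+1)) → Fin d → ℝ)}
    (hSsub : S ⊆ Msp (optFilt T F t) (optMeas T F P μ) d md)
    (hclosed : IsClosedIn (wStar (optFilt T F t) (optMeas T F P μ) d)
      (Msp (optFilt T F t) (optMeas T F P μ) d md) S)
    {u0 : Ω × Fin (T+1) → Fin d → ℝ} (hu0S : u0 ∈ S)
    (hmod : ∀ w ∈ evalAt T t '' S, modTail T t u0 w ∈ S) :
    IsClosedIn (wStar (F t) P d) (Msp (F t) P d md) (evalAt T t '' S) := by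
  have hmr : ∀ r', @Measurable Ω ℝ m0 _ (μ r') := fun r' => (hμa r').mono (hFle r') le_rfl
  intro v hv
  obtain ⟨hvcl, hvM⟩ := hv
  obtain ⟨⟨hu0m, C0, hC0⟩, hu0inM⟩ := hSsub hu0S
  obtain ⟨⟨hvm, Cv, hCv⟩, hvinM⟩ := hvM
  set ut := modTail T t u0 v with hut
  have hutm : Measurable[optFilt T F t] ut := measurable_modTail hu0m hvm
  have hutms : Measurable[optSigma T F] ut := hutm.mono (optFilt_le_optSigma hFmono) le_rfl
  have hutM : ut ∈ Msp (optFilt T F t) (optMeas T F P μ) d md := by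
    refine ⟨⟨hutm, max C0 Cv, fun x i => ?_⟩, ?_⟩
    · by_cases h : t ≤ x.2
      · simp only [hut, modTail, if_pos h]; exact (hCv x.1 i).trans (le_max_right _ _)
      · simp only [hut, modTail, if_neg h]; exact (hC0 x i).trans (le_max_left _ _)
    · refine aeOpt_inM hFmono hFle hutms fun r' => ?_
      by_cases h : t ≤ r'
      · filter_upwards [hvinM] with ω hω i hi
        have he : ut (ω, r') i = v ω i := by simp [hut, modTail, h]
        rw [he]; exact hω i hi
      · filter_upwards [aeP_of_aeOpt hFle hmr hpos hu0inM r'] with ω hω i hi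
        have he : ut (ω, r') i = u0 (ω, r') i := by simp [hut, modTail, h]
        rw [he]; exact hω i hi
  set Φ : (Ω → Fin d → ℝ) → (↥(L1t (F t) P d) → ℝ) :=
    fun X => fun Y : ↥(L1t (F t) P d) => ∫ ω, ∑ i, Y.1 ω i * X ω i ∂P with hΦ
  set Φ' : ((Ω × Fin (T+1)) → Fin d → ℝ)
      → (↥(L1t (optFilt T F t) (optMeas T F P μ) d) → ℝ) :=
    fun X => fun Y => ∫ x, ∑ i, Y.1 x i * X x i ∂(optMeas T F P μ) with hΦ'
  set yP : ↥(L1t (optFilt T F t) (optMeas T F P μ) d) → ↥(L1t (F t) P d) :=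
    fun Y => ⟨fun ω i => (1 - ∑ r ∈ Finset.Iio t, μ r ω) * Y.1 (ω, t) i,
      yProj_tail_mem hFmono hFle hμa hpos hμs Y⟩ with hyP
  set cP : ↥(L1t (optFilt T F t) (optMeas T F P μ) d) → ℝ :=
    fun Y => ∑ r ∈ Finset.Iio t,
      ∫ ω, max (μ r ω) 0 * (∑ i, Y.1 (ω, r) i * u0 (ω, r) i) ∂P with hcP
  set Ψ : (↥(L1t (F t) P d) → ℝ) → (↥(L1t (optFilt T F t) (optMeas T F P μ) d) → ℝ) :=
    fun g Y => g (yP Y) + cP Y with hΨ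
  have hkey : ∀ w, w ∈ Linf (F t) d → Ψ (Φ w) = Φ' (modTail T t u0 w) := by
    intro w hwL
    funext Y
    exact (pairing_eq_tail hFmono hFle hμa hpos hμs Y ⟨hu0m, C0, hC0⟩ hwL).symm
  have hΨcont : Continuous Ψ :=
    continuous_pi fun Y => (continuous_apply (yP Y)).add continuous_const
  have h1 : Φ v ∈ closure (Φ '' (evalAt T t '' S)) := closure_induced.mp hvcl
  have h2 : Ψ (Φ v) ∈ closure (Ψ '' (Φ '' (evalAt T t '' S))) :=
    image_closure_subset_closure_image hΨcont (Set.mem_image_of_mem _ h1)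
  have h3 : Ψ '' (Φ '' (evalAt T t '' S)) ⊆ Φ' '' S := by
    rintro _ ⟨_, ⟨_, ⟨u, huS, rfl⟩, rfl⟩, rfl⟩
    obtain ⟨⟨hum, Cu, hCu⟩, _⟩ := hSsub huS
    rw [hkey (evalAt T t u)
      ⟨measurable_evalAt_le le_rfl hum, Cu, fun ω i => hCu (ω, t) i⟩]
    exact ⟨modTail T t u0 (evalAt T t u), hmod _ ⟨u, huS, rfl⟩, rfl⟩
  have h4 : Φ' ut ∈ closure (Φ' '' S) := by
    rw [hut, ← hkey v ⟨hvm, Cv, hCv⟩]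
    exact closure_mono h3 h2
  have h5 : ut ∈ @closure _ (wStar (optFilt T F t) (optMeas T F P μ) d) S :=
    closure_induced.mpr h4
  exact ⟨ut, hclosed ⟨h5, hutM⟩, by funext ω i; simp [hut, evalAt, modTail]⟩

lemma closed_transfer_at (hFmono : Monotone F) (hFle : ∀ r', F r' ≤ m0)
    (hμa : ∀ r', Measurable[F r'] (μ r')) (hpos : ∀ r', ∀ᵐ ω ∂P, 0 < μ r' ω)
    (hst : s < t)
    {S : Set ((Ω × Fin (T+1)) → Fin d → ℝ)}
    (hSsub : S ⊆ Msp (optFilt T F t) (optMeas T F P μ) d md)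
    (hclosed : IsClosedIn (wStar (optFilt T F t) (optMeas T F P μ) d)
      (Msp (optFilt T F t) (optMeas T F P μ) d md) S)
    {u0 : Ω × Fin (T+1) → Fin d → ℝ} (hu0S : u0 ∈ S)
    (hmod : ∀ w ∈ evalAt T s '' S, modAt T s u0 w ∈ S) :
    IsClosedIn (wStar (F s) P d) (Msp (F s) P d md) (evalAt T s '' S) := by
  have hmr : ∀ r', @Measurable Ω ℝ m0 _ (μ r') := fun r' => (hμa r').mono (hFle r') le_rfl
  intro v hv
  obtain ⟨hvcl, hvM⟩ := hv
  obtain ⟨⟨hu0m, C0, hC0⟩, hu0inM⟩ := hSsub hu0S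
  obtain ⟨⟨hvm, Cv, hCv⟩, hvinM⟩ := hvM
  set ut := modAt T s u0 v with hut
  have hutm : Measurable[optFilt T F t] ut := measurable_modAt hst hu0m hvm
  have hutms : Measurable[optSigma T F] ut := hutm.mono (optFilt_le_optSigma hFmono) le_rfl
  have hutM : ut ∈ Msp (optFilt T F t) (optMeas T F P μ) d md := by
    refine ⟨⟨hutm, max C0 Cv, fun x i => ?_⟩, ?_⟩
    · by_cases h : x.2 = s
      · simp only [hut, modAt, if_pos h]; exact (hCv x.1 i).trans (le_max_right _ _)
      · simp only [hut, modAt, if_neg h]; exact (hC0 x i).trans (le_max_left _ _)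
    · refine aeOpt_inM hFmono hFle hutms fun r' => ?_
      by_cases h : r' = s
      · filter_upwards [hvinM] with ω hω i hi
        have he : ut (ω, r') i = v ω i := by simp [hut, modAt, h]
        rw [he]; exact hω i hi
      · filter_upwards [aeP_of_aeOpt hFle hmr hpos hu0inM r'] with ω hω i hi
        have he : ut (ω, r') i = u0 (ω, r') i := by simp [hut, modAt, h]
        rw [he]; exact hω i hi
  set Φ : (Ω → Fin d → ℝ) → (↥(L1t (F s) P d) → ℝ) :=
    fun X => fun Y : ↥(L1t (F s) P d) => ∫ ω, ∑ i, Y.1 ω i * X ω i ∂P with hΦ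
  set Φ' : ((Ω × Fin (T+1)) → Fin d → ℝ)
      → (↥(L1t (optFilt T F t) (optMeas T F P μ) d) → ℝ) :=
    fun X => fun Y => ∫ x, ∑ i, Y.1 x i * X x i ∂(optMeas T F P μ) with hΦ'
  set yP : ↥(L1t (optFilt T F t) (optMeas T F P μ) d) → ↥(L1t (F s) P d) :=
    fun Y => ⟨fun ω i => max (μ s ω) 0 * Y.1 (ω, s) i,
      yProj_at_mem hFle hμa Y hst.le⟩ with hyP
  set cP : ↥(L1t (optFilt T F t) (optMeas T F P μ) d) → ℝ :=
    fun Y => ∑ r ∈ Finset.univ.erase s,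
      ∫ ω, max (μ r ω) 0 * (∑ i, Y.1 (ω, r) i * u0 (ω, r) i) ∂P with hcP
  set Ψ : (↥(L1t (F s) P d) → ℝ) → (↥(L1t (optFilt T F t) (optMeas T F P μ) d) → ℝ) :=
    fun g Y => g (yP Y) + cP Y with hΨ
  have hkey : ∀ w, w ∈ Linf (F s) d → Ψ (Φ w) = Φ' (modAt T s u0 w) := by
    intro w hwL
    funext Y
    exact (pairing_eq_at hFmono hFle hμa Y ⟨hu0m, C0, hC0⟩ hwL).symm
  have hΨcont : Continuous Ψ :=
    continuous_pi fun Y => (continuous_apply (yP Y)).add continuous_const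
  have h1 : Φ v ∈ closure (Φ '' (evalAt T s '' S)) := closure_induced.mp hvcl
  have h2 : Ψ (Φ v) ∈ closure (Ψ '' (Φ '' (evalAt T s '' S))) :=
    image_closure_subset_closure_image hΨcont (Set.mem_image_of_mem _ h1)
  have h3 : Ψ '' (Φ '' (evalAt T s '' S)) ⊆ Φ' '' S := by
    rintro _ ⟨_, ⟨_, ⟨u, huS, rfl⟩, rfl⟩, rfl⟩
    obtain ⟨⟨hum, Cu, hCu⟩, _⟩ := hSsub huS
    rw [hkey (evalAt T s u)
      ⟨measurable_evalAt_le hst.le hum, Cu, fun ω i => hCu (ω, s) i⟩]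
    exact ⟨modAt T s u0 (evalAt T s u), hmod _ ⟨u, huS, rfl⟩, rfl⟩
  have h4 : Φ' ut ∈ closure (Φ' '' S) := by
    rw [hut, ← hkey v ⟨hvm, Cv, hCv⟩]
    exact closure_mono h3 h2
  have h5 : ut ∈ @closure _ (wStar (optFilt T F t) (optMeas T F P μ) d) S :=
    closure_induced.mpr h4
  exact ⟨ut, hclosed ⟨h5, hutM⟩, by funext ω i; simp [hut, evalAt, modAt]⟩

end Closed

end RMPaper

open RMPaper MeasureTheory Finset Pointwise Filter in
/-- Theorem 4.1(2): a conditional risk measure for vectors `R̄_t` on the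
optional filtration defines, via `ρ_t(X) = R̄_t(X 1_{𝕋_t})_t` and `R_s(Z) = R̄_t(Z 1_{{s}})_s`,
a conditional risk measure for processes and conditional risk measures for vectors on
`L^∞_s(ℝ^d)` for `s < t`; normalization, conditional convexity and conditional coherence are
inherited. -/
theorem optional_risk_measure_restricts
    {Ω : Type} [m0 : MeasurableSpace Ω] (P : Measure Ω) [IsProbabilityMeasure P]
    (T : ℕ) (F : Fin (T+1) → MeasurableSpace Ω)
    (hFmono : Monotone F) (hFle : ∀ r, F r ≤ m0) (hFT : F (Fin.last T) = m0)
    (hF0 : ∀ A : Set Ω, MeasurableSet[F 0] A → P A = 0 ∨ P A = 1)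
    (μ : Fin (T+1) → Ω → ℝ) (hμa : ∀ r, Measurable[F r] (μ r))
    (hμs : ∀ᵐ ω ∂P, ∑ r, μ r ω = 1)
    (hμp : ∃ ε > 0, ∀ᵐ ω ∂P, ∀ r, ε < μ r ω)
    (d md : ℕ) (hmd1 : 1 ≤ md) (hmdd : md ≤ d)
    (t : Fin (T+1))
    (Rb : (Ω × Fin (T+1) → Fin d → ℝ) → Set (Ω × Fin (T+1) → Fin d → ℝ))
    (hRb : IsCRMv (optSigma T F) (optFilt T F t) (optMeas T F P μ) d md Rb) :
    IsCRMp T F P d md t (barToProc T t Rb) ∧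
    (∀ s, s < t → IsCRMv (F s) (F s) P d md (barToVec T t s Rb)) ∧
    (NormalizedOn (Linf (optSigma T F) d) Rb →
      NormalizedOn (procSp T F d t) (barToProc T t Rb) ∧
      ∀ s, s < t → NormalizedOn (Linf (F s) d) (barToVec T t s Rb)) ∧
    (CondConvexV (optSigma T F) (optFilt T F t) (optMeas T F P μ) d Rb →
      CondConvexP T F P d t (barToProc T t Rb) ∧
      ∀ s, s < t → CondConvexV (F s) (F s) P d (barToVec T t s Rb)) ∧
    ((CondConvexV (optSigma T F) (optFilt T F t) (optMeas T F P μ) d Rb ∧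
        CondPosHomV (optSigma T F) (optFilt T F t) (optMeas T F P μ) d Rb) →
      (CondConvexP T F P d t (barToProc T t Rb) ∧ CondPosHomP T F P d t (barToProc T t Rb)) ∧
      ∀ s, s < t → CondConvexV (F s) (F s) P d (barToVec T t s Rb) ∧
        CondPosHomV (F s) (F s) P d (barToVec T t s Rb)) := by
  classical
  obtain ⟨hval, hcash, hmonoRb, hfin⟩ := hRb
  obtain ⟨hne, hclosed, hdec, R0, hG, hSeq, hnull⟩ := hfin
  have hmr : ∀ r, @Measurable Ω ℝ m0 _ (μ r) := fun r => (hμa r).mono (hFle r) le_rfl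
  have hpos' : ∀ r, ∀ᵐ ω ∂P, 0 < μ r ω := by
    obtain ⟨ε, hε, h⟩ := hμp
    intro r
    filter_upwards [h] with ω h2
    exact hε.trans (h2 r)
  have hembzero : embProc T t (0 : Fin (T+1) → Ω → Fin d → ℝ) = 0 := by
    funext x i; simp [embProc]
  have hRb0sub : Rb 0 ⊆ Msp (optFilt T F t) (optMeas T F P μ) d md :=
    (hval 0 zero_mem_Linf).1
  have himgT : evalAt T t '' Rb 0
      = {v | v ∈ Linf (F t) d ∧ ∀ᵐ ω ∂P, v ω ∈ R0 (ω, t)} :=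
    image_repr_tail hFmono hFle hmr hpos' hG hSeq hne
  -- Part 1 : IsCRMp
  have part1 : IsCRMp T F P d md t (barToProc T t Rb) := by
    refine ⟨?_, ?_, ?_, ?_⟩
    · -- values and upper set property
      intro X hX
      have hXL := embProc_mem_Linf hX
      constructor
      · rintro _ ⟨u, hu, rfl⟩
        exact evalAt_mem_Msp hFle hmr hpos' le_rfl ((hval _ hXL).1 hu)
      · refine Set.Subset.antisymm ?_ ?_
        · intro z hz
          obtain ⟨a, ha, k, hk, rfl⟩ := Set.mem_add.mp hz
          obtain ⟨u, hu, rfl⟩ := ha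
          have hkbar := embTail_mem_MspP (t := t) (μ := μ) hFmono hFle hk
          have h2 : u + embTail T t k ∈ Rb (embProc T t X) := by
            rw [← (hval _ hXL).2]
            exact Set.add_mem_add hu hkbar
          refine ⟨u + embTail T t k, h2, ?_⟩
          funext ω i
          simp [evalAt, embTail]
        · intro z hz
          exact Set.mem_add.mpr ⟨z, hz, 0, zero_mem_MspP, add_zero z⟩
    · -- cash invariance
      intro X hX mm hmm
      have hXL := embProc_mem_Linf hX
      have hmmbar := embTail_mem_Msp (t := t) (μ := μ) hFmono hFle hmm
      have heq : embProc T t (fun s ω i => X s ω i + if t ≤ s then mm ω i else 0)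
          = embProc T t X + embTail T t mm := by
        funext x i
        by_cases h : t ≤ x.2 <;> simp [embProc, embTail, h]
      simp only [barToProc]
      rw [heq, hcash _ hXL _ hmmbar, Set.image_image, Set.image_image]
      refine Set.image_congr fun u _ => ?_
      funext ω i
      simp [evalAt, embTail]
    · -- monotonicity
      intro X hX Y hY hXY
      have hXL := embProc_mem_Linf hX
      have hYL := embProc_mem_Linf hY
      refine Set.image_mono (hmonoRb _ hXL _ hYL ?_)
      refine aeOpt_le hFle hXL.1 hYL.1 fun r => ?_
      by_cases h : t ≤ r
      · filter_upwards [hXY] with ω hω i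
        simpa [embProc, h] using hω r i
      · exact ae_of_all _ fun ω i => by simp [embProc, h]
    · -- finiteness at zero
      have hρ0 : barToProc T t Rb 0 = evalAt T t '' Rb 0 := by
        simp only [barToProc, hembzero]
      obtain ⟨u0, hu0⟩ := id hne
      have hmodT : ∀ w ∈ evalAt T t '' Rb 0, modTail T t u0 w ∈ Rb 0 := by
        intro w hw
        rw [himgT] at hw
        exact modTail_mem_repr hFmono hFle hmr hpos' hG hSeq hu0 hw.1 hw.2
      refine ⟨?_, ?_, ?_, ?_⟩
      · rw [hρ0]; exact Set.Nonempty.image _ hne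
      · rw [hρ0]
        exact closed_transfer_tail hFmono hFle hμa hpos' hμs hRb0sub hclosed hu0 hmodT
      · rw [hρ0, himgT]; exact decomp_repr
      · refine ⟨fun ω => R0 (ω, t), prod_optFilt_section le_rfl hG, ?_, ?_⟩
        · rw [hρ0, himgT]
        · exact P_slice_null hFle hmr hpos' hnull t
  -- Part 2 : IsCRMv for s < t
  have part2 : ∀ s, s < t → IsCRMv (F s) (F s) P d md (barToVec T t s Rb) := by
    intro s hst
    have hembAtZero : embAt T s (0 : Ω → Fin d → ℝ) = 0 := by
      funext x i; simp [embAt]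
    have himgS : evalAt T s '' Rb 0
        = {v | v ∈ Linf (F s) d ∧ ∀ᵐ ω ∂P, v ω ∈ R0 (ω, s)} :=
      image_repr_at hFmono hFle hmr hpos' hst hG hSeq hne
    refine ⟨?_, ?_, ?_, ?_⟩
    · intro Z hZ
      have hZL := embAt_mem_Linf (T := T) hZ
      constructor
      · rintro _ ⟨u, hu, rfl⟩
        exact evalAt_mem_Msp hFle hmr hpos' hst.le ((hval _ hZL).1 hu)
      · refine Set.Subset.antisymm ?_ ?_
        · intro z hz
          obtain ⟨a, ha, k, hk, rfl⟩ := Set.mem_add.mp hz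
          obtain ⟨u, hu, rfl⟩ := ha
          have hkbar := embFrom_mem_MspP (t := t) (μ := μ) hFmono hFle hst.le hk
          have h2 : u + embFrom T s k ∈ Rb (embAt T s Z) := by
            rw [← (hval _ hZL).2]
            exact Set.add_mem_add hu hkbar
          refine ⟨u + embFrom T s k, h2, ?_⟩
          funext ω i
          simp [evalAt, embFrom]
        · intro z hz
          exact Set.mem_add.mpr ⟨z, hz, 0, zero_mem_MspP, add_zero z⟩
    · intro Z hZ mm hmm
      have hZL := embAt_mem_Linf (T := T) hZ
      have hmmbar := embAt_mem_Msp (μ := μ) hFmono hFle hst hmm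
      have heq : embAt T s (Z + mm) = embAt T s Z + embAt T s mm := by
        funext x i
        by_cases h : x.2 = s <;> simp [embAt, h]
      simp only [barToVec]
      rw [heq, hcash _ hZL _ hmmbar, Set.image_image, Set.image_image]
      refine Set.image_congr fun u _ => ?_
      funext ω i
      simp [evalAt, embAt]
    · intro Z hZ W hW hZW
      have hZL := embAt_mem_Linf (T := T) hZ
      have hWL := embAt_mem_Linf (T := T) hW
      refine Set.image_mono (hmonoRb _ hZL _ hWL ?_)
      refine aeOpt_le hFle hZL.1 hWL.1 fun r => ?_
      by_cases h : r = s
      · filter_upwards [hZW] with ω hω i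
        simpa [embAt, h] using hω i
      · exact ae_of_all _ fun ω i => by simp [embAt, h]
    · have hρ0 : barToVec T t s Rb 0 = evalAt T s '' Rb 0 := by
        simp only [barToVec, hembAtZero]
      obtain ⟨u0, hu0⟩ := id hne
      have hmodS : ∀ w ∈ evalAt T s '' Rb 0, modAt T s u0 w ∈ Rb 0 := by
        intro w hw
        rw [himgS] at hw
        exact modAt_mem_repr hFmono hFle hmr hpos' hst hG hSeq hu0 hw.1 hw.2
      refine ⟨?_, ?_, ?_, ?_⟩
      · rw [hρ0]; exact Set.Nonempty.image _ hne
      · rw [hρ0]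
        exact closed_transfer_at hFmono hFle hμa hpos' hst hRb0sub hclosed hu0 hmodS
      · rw [hρ0, himgS]; exact decomp_repr
      · refine ⟨fun ω => R0 (ω, s), prod_optFilt_section hst.le hG, ?_, ?_⟩
        · rw [hρ0, himgS]
        · exact P_slice_null hFle hmr hpos' hnull s
  have hembAtZero : ∀ s : Fin (T+1), embAt T s (0 : Ω → Fin d → ℝ) = 0 := by
    intro s; funext x i; simp [embAt]
  -- helper : conditional convexity transfers
  have hconvP : CondConvexV (optSigma T F) (optFilt T F t) (optMeas T F P μ) d Rb →
      CondConvexP T F P d t (barToProc T t Rb) := by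
    intro hCV X hX Y hY lam hlamm hlam01
    have hXL := embProc_mem_Linf hX
    have hYL := embProc_mem_Linf hY
    set lamb : Ω × Fin (T+1) → ℝ := fun x => if t ≤ x.2 then lam x.1 else 1 with hlb
    have hlambm : Measurable[optFilt T F t] lamb := by
      refine measurable_optFilt_iff.mpr ⟨fun r hr => ?_, ?_, fun r hr ω => ?_⟩
      · have he : (fun ω => lamb (ω, r)) = fun _ => (1:ℝ) := by
          funext ω; simp [hlb, not_le.mpr hr]
        rw [he]; exact measurable_const
      · have he : (fun ω => lamb (ω, t)) = lam := by funext ω; simp [hlb]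
        rw [he]; exact hlamm
      · simp [hlb, hr]
    have hlambs : Measurable[optSigma T F] lamb :=
      hlambm.mono (optFilt_le_optSigma hFmono) le_rfl
    have hlamb01 : ∀ᵐ x ∂(optMeas T F P μ), lamb x ∈ Set.Icc (0:ℝ) 1 := by
      refine aeOpt hFle ((hlambs measurableSet_Icc).compl) fun r => ?_
      by_cases h : t ≤ r
      · filter_upwards [hlam01] with ω hω
        simpa [hlb, h] using hω
      · refine ae_of_all _ fun ω => ?_
        simp only [hlb, h, if_false, Set.mem_Icc]
        exact ⟨zero_le_one, le_rfl⟩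
    have hsub := hCV _ hXL _ hYL lamb hlambm hlamb01
    have heq : (fun x i => lamb x * embProc T t X x i + (1 - lamb x) * embProc T t Y x i)
        = embProc T t (fun s ω i => lam ω * X s ω i + (1 - lam ω) * Y s ω i) := by
      funext x i
      by_cases h : t ≤ x.2 <;> simp [embProc, hlb, h]
    rw [heq] at hsub
    simp only [barToProc]
    intro z hz
    obtain ⟨a, ha, b, hb, rfl⟩ := Set.mem_add.mp hz
    obtain ⟨u', ⟨u, hu, rfl⟩, rfl⟩ := ha
    obtain ⟨w', ⟨w, hw, rfl⟩, rfl⟩ := hb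
    refine ⟨scal lamb u + scal (fun x => 1 - lamb x) w,
      hsub (Set.add_mem_add (Set.mem_image_of_mem _ hu) (Set.mem_image_of_mem _ hw)), ?_⟩
    funext ω i
    simp [evalAt, scal, hlb]
  have hconvS : ∀ s, s < t →
      CondConvexV (optSigma T F) (optFilt T F t) (optMeas T F P μ) d Rb →
      CondConvexV (F s) (F s) P d (barToVec T t s Rb) := by
    intro s hst hCV X hX Y hY lam hlamm hlam01
    have hXL := embAt_mem_Linf (T := T) (s := s) hX
    have hYL := embAt_mem_Linf (T := T) (s := s) hY
    set lamb : Ω × Fin (T+1) → ℝ := fun x => if x.2 = s then lam x.1 else 1 with hlb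
    have hlambm : Measurable[optFilt T F t] lamb := by
      refine measurable_optFilt_iff.mpr ⟨fun r hr => ?_, ?_, fun r hr ω => ?_⟩
      · by_cases h : r = s
        · have he : (fun ω => lamb (ω, r)) = lam := by funext ω; simp [hlb, h]
          rw [he]; exact h ▸ hlamm
        · have he : (fun ω => lamb (ω, r)) = fun _ => (1:ℝ) := by
            funext ω; simp [hlb, h]
          rw [he]; exact measurable_const
      · have he : (fun ω => lamb (ω, t)) = fun _ => (1:ℝ) := by
          funext ω; simp [hlb, hst.ne']
        rw [he]; exact measurable_const
      · simp [hlb, hst.ne', (hst.trans_le hr).ne']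
    have hlambs : Measurable[optSigma T F] lamb :=
      hlambm.mono (optFilt_le_optSigma hFmono) le_rfl
    have hlamb01 : ∀ᵐ x ∂(optMeas T F P μ), lamb x ∈ Set.Icc (0:ℝ) 1 := by
      refine aeOpt hFle ((hlambs measurableSet_Icc).compl) fun r => ?_
      by_cases h : r = s
      · filter_upwards [hlam01] with ω hω
        simpa [hlb, h] using hω
      · refine ae_of_all _ fun ω => ?_
        simp only [hlb, h, if_false, Set.mem_Icc]
        exact ⟨zero_le_one, le_rfl⟩
    have hsub := hCV _ hXL _ hYL lamb hlambm hlamb01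
    have heq : (fun x i => lamb x * embAt T s X x i + (1 - lamb x) * embAt T s Y x i)
        = embAt T s (fun ω i => lam ω * X ω i + (1 - lam ω) * Y ω i) := by
      funext x i
      by_cases h : x.2 = s <;> simp [embAt, hlb, h]
    rw [heq] at hsub
    simp only [barToVec]
    intro z hz
    obtain ⟨a, ha, b, hb, rfl⟩ := Set.mem_add.mp hz
    obtain ⟨u', ⟨u, hu, rfl⟩, rfl⟩ := ha
    obtain ⟨w', ⟨w, hw, rfl⟩, rfl⟩ := hb
    refine ⟨scal lamb u + scal (fun x => 1 - lamb x) w,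
      hsub (Set.add_mem_add (Set.mem_image_of_mem _ hu) (Set.mem_image_of_mem _ hw)), ?_⟩
    funext ω i
    simp [evalAt, scal, hlb]
  refine ⟨part1, part2, ?_, ?_, ?_⟩
  · -- normalization
    intro hN
    constructor
    · intro X hX
      have hXL := embProc_mem_Linf hX
      have e := congrArg (Set.image (evalAt T t)) (hN _ hXL)
      rw [image_add_of_add (fun a b => rfl)] at e
      simp only [barToProc, hembzero]
      exact e
    · intro s hst Z hZ
      have hZL := embAt_mem_Linf (T := T) (s := s) hZ
      have e := congrArg (Set.image (evalAt T s)) (hN _ hZL)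
      rw [image_add_of_add (fun a b => rfl)] at e
      simp only [barToVec, hembAtZero]
      exact e
  · -- conditional convexity
    intro hCV
    exact ⟨hconvP hCV, fun s hst => hconvS s hst hCV⟩
  · -- conditional coherence
    rintro ⟨hCV, hPH⟩
    have hPHP : CondPosHomP T F P d t (barToProc T t Rb) := by
      intro X hX lam hlamm hlamb hlampos
      have hXL := embProc_mem_Linf hX
      obtain ⟨C, hC⟩ := hlamb
      set lamb : Ω × Fin (T+1) → ℝ := fun x => if t ≤ x.2 then lam x.1 else 1 with hlb
      have hlambm : Measurable[optFilt T F t] lamb := by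
        refine measurable_optFilt_iff.mpr ⟨fun r hr => ?_, ?_, fun r hr ω => ?_⟩
        · have he : (fun ω => lamb (ω, r)) = fun _ => (1:ℝ) := by
            funext ω; simp [hlb, not_le.mpr hr]
          rw [he]; exact measurable_const
        · have he : (fun ω => lamb (ω, t)) = lam := by funext ω; simp [hlb]
          rw [he]; exact hlamm
        · simp [hlb, hr]
      have hlambs : Measurable[optSigma T F] lamb :=
        hlambm.mono (optFilt_le_optSigma hFmono) le_rfl
      have hbb : ∃ C' : ℝ, ∀ x, |lamb x| ≤ C' := by
        refine ⟨max C 1, fun x => ?_⟩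
        by_cases h : t ≤ x.2
        · simp only [hlb, if_pos h]; exact (hC x.1).trans (le_max_left _ _)
        · simp only [hlb, if_neg h, abs_one]; exact le_max_right _ _
      have hposb : ∀ᵐ x ∂(optMeas T F P μ), 0 < lamb x := by
        refine aeOpt hFle ((hlambs measurableSet_Ioi).compl) fun r => ?_
        by_cases h : t ≤ r
        · filter_upwards [hlampos] with ω hω
          simpa [hlb, h] using hω
        · refine ae_of_all _ fun ω => ?_
          simp only [hlb, h, if_false]
          exact zero_lt_one
      have h := hPH _ hXL lamb hlambm hbb hposb
      have heq : scal lamb (embProc T t X)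
          = embProc T t (fun s ω i => lam ω * X s ω i) := by
        funext x i
        by_cases hh : t ≤ x.2 <;> simp [embProc, scal, hlb, hh]
      simp only [barToProc]
      rw [← heq, h, Set.image_image, Set.image_image]
      refine Set.image_congr fun u _ => ?_
      funext ω i
      simp [evalAt, scal, hlb]
    have hPHS : ∀ s, s < t → CondPosHomV (F s) (F s) P d (barToVec T t s Rb) := by
      intro s hst X hX lam hlamm hlamb hlampos
      have hXL := embAt_mem_Linf (T := T) (s := s) hX
      obtain ⟨C, hC⟩ := hlamb
      set lamb : Ω × Fin (T+1) → ℝ := fun x => if x.2 = s then lam x.1 else 1 with hlb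
      have hlambm : Measurable[optFilt T F t] lamb := by
        refine measurable_optFilt_iff.mpr ⟨fun r hr => ?_, ?_, fun r hr ω => ?_⟩
        · by_cases h : r = s
          · have he : (fun ω => lamb (ω, r)) = lam := by funext ω; simp [hlb, h]
            rw [he]; exact h ▸ hlamm
          · have he : (fun ω => lamb (ω, r)) = fun _ => (1:ℝ) := by
              funext ω; simp [hlb, h]
            rw [he]; exact measurable_const
        · have he : (fun ω => lamb (ω, t)) = fun _ => (1:ℝ) := by
            funext ω; simp [hlb, hst.ne']
          rw [he]; exact measurable_const
        · simp [hlb, hst.ne', (hst.trans_le hr).ne']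
      have hlambs : Measurable[optSigma T F] lamb :=
        hlambm.mono (optFilt_le_optSigma hFmono) le_rfl
      have hbb : ∃ C' : ℝ, ∀ x, |lamb x| ≤ C' := by
        refine ⟨max C 1, fun x => ?_⟩
        by_cases h : x.2 = s
        · simp only [hlb, if_pos h]; exact (hC x.1).trans (le_max_left _ _)
        · simp only [hlb, if_neg h, abs_one]; exact le_max_right _ _
      have hposb : ∀ᵐ x ∂(optMeas T F P μ), 0 < lamb x := by
        refine aeOpt hFle ((hlambs measurableSet_Ioi).compl) fun r => ?_
        by_cases h : r = s
        · filter_upwards [hlampos] with ω hω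
          simpa [hlb, h] using hω
        · refine ae_of_all _ fun ω => ?_
          simp only [hlb, h, if_false]
          exact zero_lt_one
      have h := hPH _ hXL lamb hlambm hbb hposb
      have heq : scal lamb (embAt T s X) = embAt T s (scal lam X) := by
        funext x i
        by_cases hh : x.2 = s <;> simp [embAt, scal, hlb, hh]
      simp only [barToVec]
      rw [← heq, h, Set.image_image, Set.image_image]
      refine Set.image_congr fun u _ => ?_
      funext ω i
      simp [evalAt, scal, hlb]
    exact ⟨⟨hconvP hCV, hPHP⟩, fun s hst => ⟨hconvS s hst hCV, hPHS s hst⟩⟩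
end
end

section
/- Fix t∈𝕋 and let R̄_t be a time decomposable conditional risk measure for vectors on L̄^∞(ℝ^d). Define ρ_t(Y):=R̄_t(Y1_{𝕋_t})_t for Y∈R^{∞,d}_t and R_s(Z):=R̄_t(Z1_{{s}})_s for Z∈L^∞_s(ℝ^d), s<t. Then for every X∈L̄^∞(ℝ^d): R̄_t(X)=∑_{s=0}^{t−1}R_s(X_s)1_{{s}}+ρ_t(π_{t,T}(X))1_{𝕋_t}. -/
open MeasureTheory Finset Pointwise Filter

noncomputable section

section Helpers
open RMPaper MeasureTheory Finset Pointwise Filter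

variable {Ω : Type*}

lemma RMP_slice_iff (T : ℕ) (F : Fin (T+1) → MeasurableSpace Ω) (t : Fin (T+1))
    {S : Set (Ω × Fin (T+1))} (hS : MeasurableSet[optFilt T F t] S) :
    ∀ (ω : Ω) (s : Fin (T+1)), t ≤ s → ((ω, s) ∈ S ↔ (ω, t) ∈ S) := by
  have hS' : MeasurableSpace.GenerateMeasurable
      {S | (∃ r : Fin (T+1), r < t ∧ ∃ A : Set Ω, MeasurableSet[F r] A ∧
              S = A ×ˢ ({r} : Set (Fin (T+1)))) ∨
           (∃ A : Set Ω, MeasurableSet[F t] A ∧ S = A ×ˢ (Set.Ici t))} S := hS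
  clear hS
  induction hS' with
  | basic u hu =>
    intro ω s hs
    rcases hu with ⟨r, hrt, A, hA, rfl⟩ | ⟨A, hA, rfl⟩
    · simp only [Set.mem_prod, Set.mem_singleton_iff]
      constructor
      · rintro ⟨h1, h2⟩; subst h2; exact absurd hs (not_le.2 hrt)
      · rintro ⟨h1, h2⟩; subst h2; exact absurd hrt (lt_irrefl _)
    · simp [Set.mem_prod, Set.mem_Ici, hs]
  | empty => simp
  | compl u _ ih => intro ω s hs; simp only [Set.mem_compl_iff]; rw [ih ω s hs]
  | iUnion f _ ih =>
    intro ω s hs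
    simp only [Set.mem_iUnion]
    exact exists_congr fun n => ih n ω s hs

lemma RMP_meas_const {d : ℕ} (T : ℕ) (F : Fin (T+1) → MeasurableSpace Ω)
    (t : Fin (T+1)) {u : Ω × Fin (T+1) → Fin d → ℝ}
    (hu : Measurable[optFilt T F t] u) (ω : Ω) (s : Fin (T+1)) (hs : t ≤ s) :
    u (ω, s) = u (ω, t) := by
  funext i
  have hm : Measurable[optFilt T F t] fun x => u x i := (measurable_pi_apply i).comp hu
  have hset := hm (measurableSet_singleton (u (ω, t) i))
  have := (RMP_slice_iff T F t hset ω s hs).mpr rfl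
  simpa using this

lemma RMP_snd_meas (T : ℕ) (F : Fin (T+1) → MeasurableSpace Ω) (r : Fin (T+1)) :
    MeasurableSet[optSigma T F] {x : Ω × Fin (T+1) | x.2 = r} :=
  MeasurableSpace.measurableSet_generateFrom
    ⟨r, Set.univ, MeasurableSet.univ, by
      ext x
      simp only [Set.mem_setOf_eq, Set.mem_prod, Set.mem_univ, Set.mem_singleton_iff,
        true_and]⟩

lemma RMP_tail_meas (T : ℕ) (F : Fin (T+1) → MeasurableSpace Ω) (t : Fin (T+1)) :
    MeasurableSet[optSigma T F] {x : Ω × Fin (T+1) | t ≤ x.2} := by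
  have h : {x : Ω × Fin (T+1) | t ≤ x.2}
      = ⋃ r, ⋃ _ : t ≤ r, {x : Ω × Fin (T+1) | x.2 = r} := by
    ext x
    simp only [Set.mem_setOf_eq, Set.mem_iUnion]
    constructor
    · intro h; exact ⟨x.2, h, rfl⟩
    · rintro ⟨r, hr, h⟩; exact h ▸ hr
  rw [h]
  exact MeasurableSet.iUnion fun r => MeasurableSet.iUnion fun _ => RMP_snd_meas T F r

end Helpers

open RMPaper MeasureTheory Finset Pointwise Filter in
/-- Theorem 4.1(3), first part: a time decomposable conditional risk measure
for vectors on the optional filtration decomposes as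
`R̄_t(X) = ∑_{s<t} R_s(X_s) 1_{{s}} + ρ_t(π_{t,T}(X)) 1_{𝕋_t}` with
`ρ_t(Y) = R̄_t(Y 1_{𝕋_t})_t` and `R_s(Z) = R̄_t(Z 1_{{s}})_s`. -/
theorem time_decomposable_decomposition
    {Ω : Type} [m0 : MeasurableSpace Ω] (P : Measure Ω) [IsProbabilityMeasure P]
    (T : ℕ) (F : Fin (T+1) → MeasurableSpace Ω)
    (hFmono : Monotone F) (hFle : ∀ r, F r ≤ m0) (hFT : F (Fin.last T) = m0)
    (hF0 : ∀ A : Set Ω, MeasurableSet[F 0] A → P A = 0 ∨ P A = 1)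
    (μ : Fin (T+1) → Ω → ℝ) (hμa : ∀ r, Measurable[F r] (μ r))
    (hμs : ∀ᵐ ω ∂P, ∑ r, μ r ω = 1)
    (hμp : ∃ ε > 0, ∀ᵐ ω ∂P, ∀ r, ε < μ r ω)
    (d md : ℕ) (hmd1 : 1 ≤ md) (hmdd : md ≤ d)
    (t : Fin (T+1))
    (Rb : (Ω × Fin (T+1) → Fin d → ℝ) → Set (Ω × Fin (T+1) → Fin d → ℝ))
    (hRb : IsCRMv (optSigma T F) (optFilt T F t) (optMeas T F P μ) d md Rb)
    (hTD : TimeDecomp T F t Rb) :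
    ∀ X ∈ Linf (optSigma T F) d,
      Rb X = buildBar T t (fun s => barToVec T t s Rb) (barToProc T t Rb) X := by
  intro X hX
  rw [hTD X hX]
  unfold buildBar barToVec barToProc
  have hLinf : cutTail T t X ∈ Linf (optSigma T F) d := by
    obtain ⟨hXm, C, hC⟩ := hX
    refine ⟨?_, |C|, ?_⟩
    · have hcoord : ∀ i : Fin d, Measurable[optSigma T F] fun x => (cutTail T t X) x i := by
        intro i
        have hXi : Measurable[optSigma T F] fun x => X x i := (measurable_pi_apply i).comp hXm
        show Measurable[optSigma T F] fun x => if t ≤ x.2 then X x i else 0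
        exact Measurable.ite (RMP_tail_meas T F t) hXi measurable_const
      exact @measurable_pi_lambda _ _ _ (optSigma T F) _ _ hcoord
    · intro x i
      show |if t ≤ x.2 then X x i else 0| ≤ |C|
      split
      · exact (hC x i).trans (le_abs_self C)
      · rw [abs_zero]; exact abs_nonneg C
  congr 1
  · refine Finset.sum_congr rfl fun s _ => ?_
    have h1 : embAt T s (evalAt T s X) = cutAt T s X := by
      funext x i
      simp only [embAt, evalAt, cutAt]
      by_cases h : x.2 = s
      · subst h; simp
      · simp [h]
    simp only [h1, ← Set.image_comp]
    refine Set.image_congr fun u _ => ?_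
    funext x i
    simp only [Function.comp_apply, embAt, evalAt, cutAt]
    by_cases h : x.2 = s
    · subst h; simp
    · simp [h]
  · have h2 : embProc T t (procOf T t X) = cutTail T t X := by
      funext x i
      by_cases h : t ≤ x.2
      · simp [embProc, procOf, cutTail, h]
      · simp [embProc, cutTail, h]
    simp only [h2, ← Set.image_comp]
    refine Set.image_congr fun u hu => ?_
    have hmeas : Measurable[optFilt T F t] u := ((hRb.1 (cutTail T t X) hLinf).1 hu).1.1
    funext x i
    by_cases h : t ≤ x.2
    · simp only [Function.comp_apply, cutTail, embTail, evalAt, if_pos h]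
      rw [show u x = u (x.1, x.2) from rfl, RMP_meas_const T F t hmeas x.1 x.2 h]
    · simp [cutTail, embTail, h]
end
end
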